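/- arXiv:1501.07876 — 7 statements merged into one kernel-verified Lean document; each statement's English description precedes it below -/
import Mathlib

section
/- Let γ = (γ_k)_{k∈ℤ} be a bounded sequence of complex numbers with q₁(γ) < ∞. Then there exists a constant C > 0, independent of γ and m, such that for every m ∈ ℤ one has sup_{k∈ℤ} |k·(γ_k − γ_{k+m})| ≤ C·m²·q₁(γ). -/
/-- The norm `q₁(γ) = sup_k |γ_k| + sup_k |k·(Δγ)_k|`, where `(Δγ)_k = γ_k - γ_{k+1}`. -/
noncomputable def q1 (γ : ℤ → ℂ) : ℝ :=
  (⨆ k : ℤ, ‖γ k‖) + ⨆ k : ℤ, ‖(k : ℂ) * (γ k - γ (k + 1))‖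

/-!
Split according to the size of `k` relative to `m`. If `|k| ≤ 2|m|`, bound `γ_k - γ_{k+m}` by
`2 sup |γ|`. If `|k| > 2|m|`, telescope `γ_k - γ_{k+m}` into `|m|` differences `(Δγ)_j` with
`|j| ≥ |k| / 2`, each of which is at most `2 sup_j |j (Δγ)_j| / |k|`.
-/

theorem Int.abs_cast_le_sq (m : ℤ) : |(m : ℝ)| ≤ (m : ℝ) ^ 2 := by
  have h : |m| ≤ m ^ 2 := Int.natCast_natAbs m ▸ Int.natAbs_le_self_sq m
  exact_mod_cast h

section Telescoping

variable {E : Type*} [SeminormedAddCommGroup E] (γ : ℤ → E)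

theorem norm_sub_le_of_norm_sub_succ_le {a b : ℤ} (hab : a ≤ b) {ε : ℝ}
    (h : ∀ j, a ≤ j → j < b → ‖γ j - γ (j + 1)‖ ≤ ε) :
    ‖γ a - γ b‖ ≤ ((b : ℝ) - a) * ε := by
  induction b, hab using Int.leInduction with
  | base => simp
  | succ b hab ih =>
    calc ‖γ a - γ (b + 1)‖ ≤ ‖γ a - γ b‖ + ‖γ b - γ (b + 1)‖ :=
          norm_sub_le_norm_sub_add_norm_sub _ _ _
      _ ≤ ((b : ℝ) - a) * ε + ε :=
          add_le_add (ih fun j hj hjb => h j hj (by omega)) (h b hab (by omega))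
      _ = (((b + 1 : ℤ) : ℝ) - a) * ε := by push_cast; ring

theorem norm_sub_le_abs_mul_of_norm_sub_succ_le {a b : ℤ} {ε : ℝ}
    (h : ∀ j, min a b ≤ j → j < max a b → ‖γ j - γ (j + 1)‖ ≤ ε) :
    ‖γ a - γ b‖ ≤ |(b : ℝ) - a| * ε := by
  rcases le_total a b with hab | hba
  · have hab' : (a : ℝ) ≤ b := by exact_mod_cast hab
    rw [abs_of_nonneg (sub_nonneg.2 hab')]
    exact norm_sub_le_of_norm_sub_succ_le γ hab fun j => by simpa [hab] using h j
  · have hba' : (b : ℝ) ≤ a := by exact_mod_cast hba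
    rw [norm_sub_rev, abs_sub_comm, abs_of_nonneg (sub_nonneg.2 hba')]
    exact norm_sub_le_of_norm_sub_succ_le γ hba fun j => by simpa [hba] using h j

end Telescoping

section ShiftEstimate

variable {E : Type*} [SeminormedAddCommGroup E] {γ : ℤ → E} {A B : ℝ}

theorem abs_mul_norm_sub_shift_le_of_abs_le (hA : ∀ j, ‖γ j‖ ≤ A) {k m : ℤ}
    (hkm : |k| ≤ 2 * |m|) :
    |(k : ℝ)| * ‖γ k - γ (k + m)‖ ≤ 4 * |(m : ℝ)| * A := by
  have hkm' : |(k : ℝ)| ≤ 2 * |(m : ℝ)| := by exact_mod_cast hkm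
  have hdiff : ‖γ k - γ (k + m)‖ ≤ 2 * A := by
    linarith [norm_sub_le (γ k) (γ (k + m)), hA k, hA (k + m)]
  have hA0 : 0 ≤ A := (norm_nonneg _).trans (hA 0)
  calc |(k : ℝ)| * ‖γ k - γ (k + m)‖ ≤ (2 * |(m : ℝ)|) * (2 * A) :=
        mul_le_mul hkm' hdiff (norm_nonneg _) (by positivity)
    _ = 4 * |(m : ℝ)| * A := by ring

theorem abs_mul_norm_sub_shift_le_of_lt_abs
    (hB : ∀ j : ℤ, |(j : ℝ)| * ‖γ j - γ (j + 1)‖ ≤ B) {k m : ℤ} (hkm : 2 * |m| < |k|) :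
    |(k : ℝ)| * ‖γ k - γ (k + m)‖ ≤ 2 * |(m : ℝ)| * B := by
  have hk : 0 < |(k : ℝ)| := by
    have : 0 < |k| := lt_of_le_of_lt (by positivity) hkm
    exact_mod_cast this
  have hstep : ∀ j, min k (k + m) ≤ j → j < max k (k + m) →
      ‖γ j - γ (j + 1)‖ ≤ 2 * B / |(k : ℝ)| := by
    intro j hj hj'
    -- every `j` between `k` and `k + m` has `|j| ≥ |k| - |m| > |k| / 2`
    have hkj : |k| ≤ 2 * |j| := by simp only [abs_eq_max_neg] at *; omega
    have hkj' : |(k : ℝ)| ≤ 2 * |(j : ℝ)| := by exact_mod_cast hkj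
    rw [le_div_iff₀ hk]
    nlinarith [hB j, norm_nonneg (γ j - γ (j + 1))]
  have htel := norm_sub_le_abs_mul_of_norm_sub_succ_le γ hstep
  push_cast at htel
  rw [add_sub_cancel_left] at htel
  calc |(k : ℝ)| * ‖γ k - γ (k + m)‖ ≤ |(k : ℝ)| * (|(m : ℝ)| * (2 * B / |(k : ℝ)|)) :=
        mul_le_mul_of_nonneg_left htel hk.le
    _ = 2 * |(m : ℝ)| * B := by field_simp

theorem abs_mul_norm_sub_shift_le (hA : ∀ j, ‖γ j‖ ≤ A)
    (hB : ∀ j : ℤ, |(j : ℝ)| * ‖γ j - γ (j + 1)‖ ≤ B) (k m : ℤ) :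
    |(k : ℝ)| * ‖γ k - γ (k + m)‖ ≤ 4 * (m : ℝ) ^ 2 * (A + B) := by
  have hA0 : 0 ≤ A := (norm_nonneg _).trans (hA 0)
  have hB0 : 0 ≤ B := by simpa using hB 0
  have hm := Int.abs_cast_le_sq m
  rcases le_or_gt |k| (2 * |m|) with hkm | hkm
  · calc _ ≤ 4 * |(m : ℝ)| * A := abs_mul_norm_sub_shift_le_of_abs_le hA hkm
      _ ≤ 4 * (m : ℝ) ^ 2 * (A + B) := by nlinarith
  · calc _ ≤ 2 * |(m : ℝ)| * B := abs_mul_norm_sub_shift_le_of_lt_abs hB hkm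
      _ ≤ 4 * (m : ℝ) ^ 2 * (A + B) := by nlinarith [abs_nonneg (m : ℝ)]

end ShiftEstimate

/-- If `γ` is a bounded sequence with `q₁(γ) < ∞` (i.e. both sups defining `q₁(γ)` are
finite), then there is a constant `C > 0`, independent of `γ` and `m`, such that
`sup_k |k·(γ_k − γ_{k+m})| ≤ C·m²·q₁(γ)` for all `m ∈ ℤ`. -/
theorem stmt0 :
    ∃ C > (0 : ℝ), ∀ γ : ℤ → ℂ,
      BddAbove (Set.range fun k : ℤ => ‖γ k‖) →
      BddAbove (Set.range fun k : ℤ => ‖(k : ℂ) * (γ k - γ (k + 1))‖) →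
      ∀ m k : ℤ, ‖(k : ℂ) * (γ k - γ (k + m))‖ ≤ C * (m : ℝ) ^ 2 * q1 γ := by
  refine ⟨4, by norm_num, fun γ hγ hΔγ m k => ?_⟩
  have hA : ∀ j, ‖γ j‖ ≤ ⨆ k : ℤ, ‖γ k‖ := le_ciSup hγ
  have hB : ∀ j : ℤ, |(j : ℝ)| * ‖γ j - γ (j + 1)‖ ≤ ⨆ k : ℤ, ‖(k : ℂ) * (γ k - γ (k + 1))‖ :=
    fun j => by simpa only [norm_mul, Complex.norm_intCast] using le_ciSup hΔγ j
  rw [norm_mul, Complex.norm_intCast]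
  exact abs_mul_norm_sub_shift_le hA hB k m
end

section
/- Let γ = (γ_k)_{k∈ℤ} be a bounded sequence of complex numbers with q₂(γ) < ∞. For m ∈ ℤ let δ^{(m)} be the sequence δ^{(m)}_k = k·(γ_k − γ_{k+m}). Then there exists a constant C > 0, independent of γ and m, such that for every m ∈ ℤ one has q₁(δ^{(m)}) ≤ C·|m|³·q₂(γ), i.e. sup_{k∈ℤ}|δ^{(m)}_k| + sup_{k∈ℤ}|k·(δ^{(m)}_k − δ^{(m)}_{k+1})| ≤ C·|m|³·q₂(γ). -/
/-- The norm `q₂(γ) = q₁(γ) + sup_k |k²·(Δ²γ)_k|`, where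
`(Δ²γ)_k = γ_k - 2γ_{k+1} + γ_{k+2}`. -/
noncomputable def q2 (γ : ℤ → ℂ) : ℝ :=
  q1 γ + ⨆ k : ℤ, ‖(k : ℂ) ^ 2 * (γ k - 2 * γ (k + 1) + γ (k + 2))‖

/-- The sequence `δ^{(m)}_k = k·(γ_k − γ_{k+m})`. -/
noncomputable def deltaSeq (γ : ℤ → ℂ) (m k : ℤ) : ℂ :=
  (k : ℂ) * (γ k - γ (k + m))

theorem dist_le_natAbs_mul_of_dist_succ_le {α : Type*} [PseudoMetricSpace α] (f : ℤ → α)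
    (a m : ℤ) {c : ℝ} (h : ∀ j, |j - a| ≤ |m| → dist (f j) (f (j + 1)) ≤ c) :
    dist (f a) (f (a + m)) ≤ m.natAbs * c := by
  have step (b : ℤ) (n : ℕ) (hb : ∀ i < n, |b + i - a| ≤ |m|) :
      dist (f b) (f (b + n)) ≤ n * c := by
    simpa using dist_le_range_sum_of_dist_le (f := fun i : ℕ => f (b + i)) (d := fun _ => c) n
      fun {i} hi => by simpa [add_assoc] using h _ (hb i hi)
  obtain ⟨n, rfl | rfl⟩ := Int.eq_nat_or_neg m
  · simpa using step a n fun i hi => by simp only [Int.abs_eq_natAbs]; omega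
  · simpa [dist_comm, ← sub_eq_add_neg] using
      step (a - n) n fun i hi => by simp only [Int.abs_eq_natAbs]; omega

theorem pow_le_one_add_pow_mul_one_add_pow {u s d : ℝ} (hs : 0 ≤ s) (hd : 0 ≤ d)
    (hu : 0 ≤ u) (hus : u ≤ s + d) (p : ℕ) : u ^ p ≤ (1 + d) ^ p * (1 + s ^ p) := by
  rcases le_total s 1 with hs1 | hs1
  · calc u ^ p ≤ (1 + d) ^ p := by gcongr; linarith
      _ ≤ (1 + d) ^ p * (1 + s ^ p) := le_mul_of_one_le_right (by positivity) (le_add_of_nonneg_right (by positivity))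
  · calc u ^ p ≤ ((1 + d) * s) ^ p := by gcongr; nlinarith
      _ ≤ (1 + d) ^ p * (1 + s ^ p) := by rw [mul_pow]; gcongr; linarith

theorem norm_pow_mul_le {𝕜 : Type*} [NormedDivisionRing 𝕜] {z w : 𝕜} {d : ℝ}
    (hzw : ‖z - w‖ ≤ d) (p : ℕ) (x : 𝕜) :
    ‖z ^ p * x‖ ≤ (1 + d) ^ p * (‖x‖ + ‖w ^ p * x‖) := by
  have hz : ‖z‖ ≤ ‖w‖ + d := by linarith [norm_le_norm_add_norm_sub' z w]
  calc ‖z ^ p * x‖ = ‖z‖ ^ p * ‖x‖ := by rw [norm_mul, norm_pow]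
    _ ≤ (1 + d) ^ p * (1 + ‖w‖ ^ p) * ‖x‖ := by
        gcongr
        exact pow_le_one_add_pow_mul_one_add_pow (norm_nonneg _) ((norm_nonneg _).trans hzw)
          (norm_nonneg _) hz p
    _ = (1 + d) ^ p * (‖x‖ + ‖w ^ p * x‖) := by rw [norm_mul, norm_pow]; ring

theorem norm_pow_mul_sub_le (β : ℤ → ℂ) {A B : ℝ} (p : ℕ) (hA : ∀ j, ‖β j‖ ≤ A)
    (hB : ∀ j : ℤ, ‖(j : ℂ) ^ p * (β j - β (j + 1))‖ ≤ B) (k a m : ℤ) :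
    ‖(k : ℂ) ^ p * (β a - β (a + m))‖ ≤
      |(m : ℝ)| * ((1 + (|(k : ℝ) - a| + |(m : ℝ)|)) ^ p * (2 * A + B)) := by
  have key := dist_le_natAbs_mul_of_dist_succ_le (fun j => (k : ℂ) ^ p * β j) a m
    (c := (1 + (|(k : ℝ) - a| + |(m : ℝ)|)) ^ p * (2 * A + B)) fun j hj => by
    have hkj : ‖(k : ℂ) - j‖ ≤ |(k : ℝ) - a| + |(m : ℝ)| := by
      have hj' : |(a : ℝ) - j| ≤ |(m : ℝ)| := by rw [abs_sub_comm]; exact_mod_cast hj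
      rw [← Int.cast_sub, Complex.norm_intCast, Int.cast_sub]
      linarith [abs_sub_le (k : ℝ) a j]
    rw [dist_eq_norm, ← mul_sub]
    calc ‖(k : ℂ) ^ p * (β j - β (j + 1))‖
        ≤ (1 + (|(k : ℝ) - a| + |(m : ℝ)|)) ^ p * (‖β j - β (j + 1)‖ + B) :=
          (norm_pow_mul_le hkj p _).trans (by gcongr; exact hB j)
      _ ≤ _ := by
          gcongr
          linarith [norm_sub_le (β j) (β (j + 1)), hA j, hA (j + 1)]
  rwa [dist_eq_norm, ← mul_sub, Nat.cast_natAbs, Int.cast_abs] at key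

theorem mul_deltaSeq_sub_deltaSeq_succ (γ : ℤ → ℂ) (m k : ℤ) :
    (k : ℂ) * (deltaSeq γ m k - deltaSeq γ m (k + 1)) =
      (k : ℂ) ^ 2 * ((γ k - γ (k + 1)) - (γ (k + m) - γ (k + m + 1))) -
        k * (γ (k + 1) - γ (k + 1 + m)) := by
  rw [deltaSeq, deltaSeq, add_right_comm k 1 m]
  push_cast
  ring

theorem norm_deltaSeq_le {γ : ℤ → ℂ} {A B : ℝ} (hA : ∀ k, ‖γ k‖ ≤ A)
    (hB : ∀ k : ℤ, ‖(k : ℂ) * (γ k - γ (k + 1))‖ ≤ B) (m k : ℤ) :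
    ‖deltaSeq γ m k‖ ≤ |(m : ℝ)| * ((1 + |(m : ℝ)|) * (2 * A + B)) := by
  simpa only [deltaSeq, pow_one, sub_self, abs_zero, zero_add] using
    norm_pow_mul_sub_le γ 1 hA (by simpa only [pow_one] using hB) k k m

theorem norm_mul_deltaSeq_sub_le {γ : ℤ → ℂ} {A B D : ℝ} (hA : ∀ k, ‖γ k‖ ≤ A)
    (hB : ∀ k : ℤ, ‖(k : ℂ) * (γ k - γ (k + 1))‖ ≤ B)
    (hD : ∀ k : ℤ, ‖(k : ℂ) ^ 2 * (γ k - 2 * γ (k + 1) + γ (k + 2))‖ ≤ D) (m k : ℤ) :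
    ‖(k : ℂ) * (deltaSeq γ m k - deltaSeq γ m (k + 1))‖ ≤
      |(m : ℝ)| * ((1 + |(m : ℝ)|) ^ 2 * (2 * (2 * A) + D)) +
        |(m : ℝ)| * ((2 + |(m : ℝ)|) * (2 * A + B)) := by
  have hΔA (j : ℤ) : ‖γ j - γ (j + 1)‖ ≤ 2 * A := by
    linarith [norm_sub_le (γ j) (γ (j + 1)), hA j, hA (j + 1)]
  have hΔD (j : ℤ) : ‖(j : ℂ) ^ 2 * ((γ j - γ (j + 1)) - (γ (j + 1) - γ (j + 1 + 1)))‖ ≤ D := by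
    convert hD j using 3; rw [add_assoc]; ring_nf
  rw [mul_deltaSeq_sub_deltaSeq_succ]
  refine (norm_sub_le _ _).trans (add_le_add ?_ ?_)
  · simpa only [sub_self, abs_zero, zero_add] using
      norm_pow_mul_sub_le (fun j => γ j - γ (j + 1)) 2 hΔA hΔD k k m
  · have := norm_pow_mul_sub_le γ 1 hA (by simpa only [pow_one] using hB) k (k + 1) m
    rw [pow_one, pow_one] at this
    refine this.trans_eq ?_
    push_cast
    rw [sub_add_cancel_left, abs_neg, abs_one]
    ring

theorem abs_intCast_mul_two_add_sq_le (m : ℤ) :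
    |(m : ℝ)| * (2 + |(m : ℝ)|) ^ 2 ≤ 9 * |(m : ℝ)| ^ 3 := by
  rcases eq_or_ne m 0 with rfl | hm
  · simp
  have hm₁ : 1 ≤ |(m : ℝ)| := by rw [← Int.cast_abs]; exact_mod_cast Int.one_le_abs hm
  calc |(m : ℝ)| * (2 + |(m : ℝ)|) ^ 2 ≤ |(m : ℝ)| * (3 * |(m : ℝ)|) ^ 2 := by gcongr; linarith
    _ = 9 * |(m : ℝ)| ^ 3 := by ring

/-- If `γ` is a bounded sequence with `q₂(γ) < ∞` (i.e. all three sups defining `q₂(γ)`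
are finite), then there is a constant `C > 0`, independent of `γ` and `m`, such that for
all `m ∈ ℤ` the sequence `δ^{(m)}` satisfies `q₁(δ^{(m)}) ≤ C·|m|³·q₂(γ)`, i.e.
`sup_k |δ^{(m)}_k| + sup_k |k·(δ^{(m)}_k − δ^{(m)}_{k+1})| ≤ C·|m|³·q₂(γ)` (both sups
being finite). -/
theorem stmt1 :
    ∃ C > (0 : ℝ), ∀ γ : ℤ → ℂ,
      BddAbove (Set.range fun k : ℤ => ‖γ k‖) →
      BddAbove (Set.range fun k : ℤ => ‖(k : ℂ) * (γ k - γ (k + 1))‖) →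
      BddAbove (Set.range fun k : ℤ => ‖(k : ℂ) ^ 2 * (γ k - 2 * γ (k + 1) + γ (k + 2))‖) →
      ∀ m : ℤ,
        BddAbove (Set.range fun k : ℤ => ‖deltaSeq γ m k‖) ∧
        BddAbove (Set.range fun k : ℤ =>
          ‖(k : ℂ) * (deltaSeq γ m k - deltaSeq γ m (k + 1))‖) ∧
        (⨆ k : ℤ, ‖deltaSeq γ m k‖) +
            (⨆ k : ℤ, ‖(k : ℂ) * (deltaSeq γ m k - deltaSeq γ m (k + 1))‖) ≤
          C * |(m : ℝ)| ^ 3 * q2 γ := by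
  refine ⟨72, by norm_num, fun γ hA hB hD m => ?_⟩
  have h₁ := norm_deltaSeq_le (le_ciSup hA) (le_ciSup hB) m
  have h₂ := norm_mul_deltaSeq_sub_le (le_ciSup hA) (le_ciSup hB) (le_ciSup hD) m
  refine ⟨⟨_, Set.forall_mem_range.2 h₁⟩, ⟨_, Set.forall_mem_range.2 h₂⟩, ?_⟩
  set A := ⨆ k : ℤ, ‖γ k‖
  set B := ⨆ k : ℤ, ‖(k : ℂ) * (γ k - γ (k + 1))‖
  set D := ⨆ k : ℤ, ‖(k : ℂ) ^ 2 * (γ k - 2 * γ (k + 1) + γ (k + 2))‖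
  set M := |(m : ℝ)|
  have hM₀ : 0 ≤ M := abs_nonneg _
  have hA₀ : 0 ≤ A := (norm_nonneg _).trans (le_ciSup hA 0)
  have hB₀ : 0 ≤ B := (norm_nonneg _).trans (le_ciSup hB 0)
  have hD₀ : 0 ≤ D := (norm_nonneg _).trans (le_ciSup hD 0)
  calc _ ≤ M * ((1 + M) * (2 * A + B)) +
        (M * ((1 + M) ^ 2 * (2 * (2 * A) + D)) + M * ((2 + M) * (2 * A + B))) :=
        add_le_add (ciSup_le h₁) (ciSup_le h₂)
    _ ≤ M * ((2 + M) ^ 2 * (2 * A + B)) +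
        (M * ((2 + M) ^ 2 * (2 * (2 * A) + D)) + M * ((2 + M) ^ 2 * (2 * A + B))) := by
        gcongr <;> nlinarith
    _ = M * (2 + M) ^ 2 * (8 * A + 2 * B + D) := by ring
    _ ≤ 9 * M ^ 3 * (8 * A + 2 * B + D) :=
        mul_le_mul_of_nonneg_right (abs_intCast_mul_two_add_sq_le m) (by linarith)
    _ ≤ 72 * M ^ 3 * q2 γ := by
        rw [q2, q1]; nlinarith [pow_nonneg hM₀ 3]
end

section
/- Let A be a self-adjoint operator with domain D(A) on a Hilbert space H and let U be a unitary operator on H of class C¹(A) with commutator ad_A U. Then for every n ∈ ℤ the vector U^n ψ belongs to D(A) whenever ψ ∈ D(A), and for every (φ, ψ) ∈ H × D(A): limsup_{n→∞} n^{−1}·|⟨U^n φ, A(U^n ψ)⟩| ≤ ‖ad_A U‖·‖φ‖·‖ψ‖ and limsup_{n→∞} n^{−1}·|⟨U^{*n} φ, A(U^{*n} ψ)⟩| ≤ ‖ad_A U‖·‖φ‖·‖ψ‖. -/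
open scoped ComplexInnerProductSpace

/-!
Self-adjointness of `A` turns the commutator identity into the statement that `V ψ` lies in
the domain of `A† = A` with `A (V ψ) = V (A ψ) + B ψ`. Iterating, for a contraction `V` the
defect `A (Vⁿ ψ) - Vⁿ (A ψ)` grows at most like `n ‖B‖ ‖ψ‖`, so
`|⟪Vⁿ φ, A Vⁿ ψ⟫| ≤ ‖φ‖ ‖A ψ‖ + n ‖B‖ ‖φ‖ ‖ψ‖`. Taking adjoints shows that `U*` has commutator
`-(ad_A U)*`, so both `U` and `U*` are covered.
-/

open scoped InnerProductSpace
open Filter Topology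

section

variable {𝕜 E : Type*} [RCLike 𝕜] [NormedAddCommGroup E] [InnerProductSpace 𝕜 E]

theorem limsup_inv_mul_le_of_le_add_mul {u : ℕ → ℝ} {c d : ℝ} (hd : 0 ≤ d)
    (hu0 : ∀ n, 0 ≤ u n) (hu : ∀ n : ℕ, u n ≤ c + n * d) :
    limsup (fun n : ℕ => (n : ℝ)⁻¹ * u n) atTop ≤ d := by
  have hle : ∀ n : ℕ, (n : ℝ)⁻¹ * u n ≤ (n : ℝ)⁻¹ * c + d := by
    intro n
    rcases Nat.eq_zero_or_pos n with rfl | hn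
    · simpa using hd
    calc (n : ℝ)⁻¹ * u n ≤ (n : ℝ)⁻¹ * (c + n * d) := by gcongr; exact hu n
      _ = (n : ℝ)⁻¹ * c + d := by field_simp
  have hlim : Tendsto (fun n : ℕ => (n : ℝ)⁻¹ * c + d) atTop (𝓝 d) := by
    simpa using (tendsto_inv_atTop_nhds_zero_nat.mul_const c).add_const d
  calc limsup (fun n : ℕ => (n : ℝ)⁻¹ * u n) atTop
      ≤ limsup (fun n : ℕ => (n : ℝ)⁻¹ * c + d) atTop :=
        limsup_le_limsup (.of_forall hle)
          (isCoboundedUnder_le_of_le atTop fun n => mul_nonneg (by positivity) (hu0 n))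
          hlim.isBoundedUnder_le
    _ = d := hlim.limsup_eq

theorem ContinuousLinearMap.norm_pow_apply_le {V : E →L[𝕜] E} (hV : ‖V‖ ≤ 1) (n : ℕ) (x : E) :
    ‖(V ^ n) x‖ ≤ ‖x‖ := by
  induction n with
  | zero => simp
  | succ n ih =>
    rw [pow_succ']
    calc ‖V ((V ^ n) x)‖ ≤ ‖(V ^ n) x‖ := by simpa using V.le_of_opNorm_le hV ((V ^ n) x)
      _ ≤ ‖x‖ := ih

namespace LinearPMap

/-- `V` is of class `C¹(A)` with commutator `B = ad_A V`, in the weak (form) sense. -/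
def HasCommutator (A : E →ₗ.[𝕜] E) (V B : E →L[𝕜] E) : Prop :=
  ∀ φ ψ : A.domain, ⟪A φ, V ψ⟫_𝕜 - ⟪(φ : E), V (A ψ)⟫_𝕜 = ⟪(φ : E), B ψ⟫_𝕜

variable [CompleteSpace E] {A : E →ₗ.[𝕜] E} {V B : E →L[𝕜] E}

theorem _root_.IsSelfAdjoint.exists_apply_eq_of_inner_eq (hA : IsSelfAdjoint A) {y w : E}
    (h : ∀ x : A.domain, ⟪w, x⟫_𝕜 = ⟪y, A x⟫_𝕜) : ∃ hy : y ∈ A.domain, A ⟨y, hy⟩ = w := by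
  rw [← isSelfAdjoint_def.mp hA]
  exact ⟨mem_adjoint_domain_of_exists y ⟨w, h⟩, adjoint_apply_eq hA.dense_domain _ h⟩

theorem HasCommutator.star (h : A.HasCommutator V B) : A.HasCommutator (star V) (-star B) := by
  intro φ ψ
  have h' := congrArg (starRingEnd 𝕜) (h ψ φ)
  rw [_root_.map_sub, inner_conj_symm, inner_conj_symm, inner_conj_symm] at h'
  rw [_root_.neg_apply, inner_neg_right, ContinuousLinearMap.star_eq_adjoint,
    ContinuousLinearMap.star_eq_adjoint, ContinuousLinearMap.adjoint_inner_right,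
    ContinuousLinearMap.adjoint_inner_right, ContinuousLinearMap.adjoint_inner_right]
  linear_combination -h'

theorem HasCommutator.exists_apply_map_eq (h : A.HasCommutator V B) (hA : IsSelfAdjoint A)
    (ψ : A.domain) : ∃ hψ : V ψ ∈ A.domain, A ⟨V ψ, hψ⟩ = V (A ψ) + B ψ := by
  refine hA.exists_apply_eq_of_inner_eq fun x => ?_
  rw [← inner_conj_symm, ← inner_conj_symm (V ψ : E), inner_add_right]
  congr 1
  linear_combination (h x ψ).symm

theorem HasCommutator.exists_norm_apply_pow_sub_le (h : A.HasCommutator V B)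
    (hA : IsSelfAdjoint A) (hV : ‖V‖ ≤ 1) (n : ℕ) (ψ : A.domain) :
    ∃ hψ : (V ^ n) ψ ∈ A.domain, ‖A ⟨(V ^ n) ψ, hψ⟩ - (V ^ n) (A ψ)‖ ≤ n * ‖B‖ * ‖(ψ : E)‖ := by
  induction n generalizing ψ with
  | zero => exact ⟨ψ.2, by simp⟩
  | succ n ih =>
    obtain ⟨hVψ, hAVψ⟩ := h.exists_apply_map_eq hA ψ
    obtain ⟨hψ, hbound⟩ := ih ⟨V ψ, hVψ⟩
    rw [pow_succ]
    refine ⟨hψ, ?_⟩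
    have hdefect : A ⟨(V ^ n) (V ψ), hψ⟩ - (V ^ n) (V (A ψ))
        = (A ⟨(V ^ n) (V ψ), hψ⟩ - (V ^ n) (A ⟨V ψ, hVψ⟩)) + (V ^ n) (B ψ) := by
      rw [hAVψ, _root_.map_add]; abel
    calc ‖A ⟨(V ^ n) (V ψ), hψ⟩ - (V ^ n) (V (A ψ))‖
        ≤ n * ‖B‖ * ‖V ψ‖ + ‖B ψ‖ :=
          hdefect ▸ norm_add_le_of_le hbound (V.norm_pow_apply_le hV n _)
      _ ≤ n * ‖B‖ * ‖(ψ : E)‖ + ‖B‖ * ‖(ψ : E)‖ := by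
          gcongr
          · simpa using V.le_of_opNorm_le hV ψ
          · exact B.le_opNorm ψ
      _ = (n + 1 : ℕ) * ‖B‖ * ‖(ψ : E)‖ := by push_cast; ring

theorem HasCommutator.limsup_inv_mul_norm_inner_pow_le (h : A.HasCommutator V B)
    (hA : IsSelfAdjoint A) (hV : ‖V‖ ≤ 1) (φ : E) (ψ : A.domain)
    (hψ : ∀ n : ℕ, (V ^ n) ψ ∈ A.domain) :
    limsup (fun n : ℕ => (n : ℝ)⁻¹ * ‖⟪(V ^ n) φ, A ⟨(V ^ n) ψ, hψ n⟩⟫_𝕜‖) atTop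
      ≤ ‖B‖ * ‖φ‖ * ‖(ψ : E)‖ := by
  refine limsup_inv_mul_le_of_le_add_mul (c := ‖φ‖ * ‖A ψ‖) (by positivity)
    (fun _ => norm_nonneg _) fun n => ?_
  obtain ⟨_, hbound⟩ := h.exists_norm_apply_pow_sub_le hA hV n ψ
  set x := A ⟨(V ^ n) ψ, hψ n⟩
  calc ‖⟪(V ^ n) φ, x⟫_𝕜‖
      = ‖⟪(V ^ n) φ, x - (V ^ n) (A ψ)⟫_𝕜 + ⟪(V ^ n) φ, (V ^ n) (A ψ)⟫_𝕜‖ := by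
        rw [← inner_add_right, sub_add_cancel]
    _ ≤ ‖(V ^ n) φ‖ * ‖x - (V ^ n) (A ψ)‖ + ‖(V ^ n) φ‖ * ‖(V ^ n) (A ψ)‖ :=
        norm_add_le_of_le (norm_inner_le_norm _ _) (norm_inner_le_norm _ _)
    _ ≤ ‖φ‖ * (n * ‖B‖ * ‖(ψ : E)‖) + ‖φ‖ * ‖A ψ‖ := by
        gcongr <;> exact V.norm_pow_apply_le hV n _
    _ = ‖φ‖ * ‖A ψ‖ + n * (‖B‖ * ‖φ‖ * ‖(ψ : E)‖) := by ring

end LinearPMap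

end

theorem stmt8_general
    {H : Type*} [NormedAddCommGroup H] [InnerProductSpace ℂ H] [CompleteSpace H]
    -- A self-adjoint (densely defined) operator on H
    (A : H →ₗ.[ℂ] H) (hsa : A.adjoint = A)
    -- U unitary of class C¹(A) with commutator adU
    (U adU : H →L[ℂ] H) (hU : U ∈ unitary (H →L[ℂ] H))
    (hC1 : ∀ φ ψ : A.domain,
      ⟪A φ, U (ψ : H)⟫ - ⟪(φ : H), U (A ψ)⟫ = ⟪(φ : H), adU (ψ : H)⟫) :
    ∃ hm : ∀ (n : ℕ) (x : H), x ∈ A.domain →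
        ((U ^ n) x ∈ A.domain ∧ ((star U) ^ n) x ∈ A.domain),
      ∀ (φ : H) (ψ : A.domain),
        Filter.limsup
            (fun n : ℕ => (n : ℝ)⁻¹ *
              ‖⟪(U ^ n) φ, A ⟨(U ^ n) (ψ : H), (hm n ψ ψ.2).1⟩⟫‖)
            Filter.atTop ≤ ‖adU‖ * ‖φ‖ * ‖(ψ : H)‖ ∧
        Filter.limsup
            (fun n : ℕ => (n : ℝ)⁻¹ *
              ‖⟪((star U) ^ n) φ, A ⟨((star U) ^ n) (ψ : H), (hm n ψ ψ.2).2⟩⟫‖)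
            Filter.atTop ≤ ‖adU‖ * ‖φ‖ * ‖(ψ : H)‖ := by
  have hA : IsSelfAdjoint A := hsa
  replace hC1 : A.HasCommutator U adU := hC1
  have hC1' : A.HasCommutator (star U) (-star adU) := hC1.star
  have hUle : ‖U‖ ≤ 1 := U.opNorm_le_bound zero_le_one fun x => by
    rw [U.norm_map_of_mem_unitary hU, one_mul]
  have hUle' : ‖star U‖ ≤ 1 := by rwa [norm_star]
  refine ⟨fun n x hx => ⟨(hC1.exists_norm_apply_pow_sub_le hA hUle n ⟨x, hx⟩).1,
    (hC1'.exists_norm_apply_pow_sub_le hA hUle' n ⟨x, hx⟩).1⟩, fun φ ψ => ⟨?_, ?_⟩⟩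
  · exact hC1.limsup_inv_mul_norm_inner_pow_le hA hUle φ ψ _
  · simpa only [norm_neg, norm_star] using
      hC1'.limsup_inv_mul_norm_inner_pow_le hA hUle' φ ψ _

/-- Proposition 5.4 ("laurent-0"): if a unitary `U` is of class `C¹(A)` with commutator
`ad_A U`, then the powers `U^n` and `U^{*n}` preserve `D(A)` (so `U^n ψ ∈ D(A)` for every
`n ∈ ℤ` and `ψ ∈ D(A)`), and for every `(φ, ψ) ∈ H × D(A)` one has
`limsup_{n→∞} n⁻¹ |⟨U^n φ, A U^n ψ⟩| ≤ ‖ad_A U‖ ‖φ‖ ‖ψ‖`, and likewise with `U*`. -/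
theorem stmt8
    {H : Type*} [NormedAddCommGroup H] [InnerProductSpace ℂ H] [CompleteSpace H]
    -- A self-adjoint (densely defined) operator on H
    (A : H →ₗ.[ℂ] H) (hdense : Dense (A.domain : Set H)) (hsa : A.adjoint = A)
    -- U unitary of class C¹(A) with commutator adU
    (U adU : H →L[ℂ] H) (hU : U ∈ unitary (H →L[ℂ] H))
    (hC1 : ∀ φ ψ : A.domain,
      ⟪A φ, U (ψ : H)⟫ - ⟪(φ : H), U (A ψ)⟫ = ⟪(φ : H), adU (ψ : H)⟫) :
    ∃ hm : ∀ (n : ℕ) (x : H), x ∈ A.domain →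
        ((U ^ n) x ∈ A.domain ∧ ((star U) ^ n) x ∈ A.domain),
      ∀ (φ : H) (ψ : A.domain),
        Filter.limsup
            (fun n : ℕ => (n : ℝ)⁻¹ *
              ‖⟪(U ^ n) φ, A ⟨(U ^ n) (ψ : H), (hm n ψ ψ.2).1⟩⟫‖)
            Filter.atTop ≤ ‖adU‖ * ‖φ‖ * ‖(ψ : H)‖ ∧
        Filter.limsup
            (fun n : ℕ => (n : ℝ)⁻¹ *
              ‖⟪((star U) ^ n) φ, A ⟨((star U) ^ n) (ψ : H), (hm n ψ ψ.2).2⟩⟫‖)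
            Filter.atTop ≤ ‖adU‖ * ‖φ‖ * ‖(ψ : H)‖ :=
  stmt8_general A hsa U adU hU hC1
end

section
/- Let A be a self-adjoint operator with domain D(A) on a Hilbert space H, and let V be a bounded invertible operator on H of class C¹(A); then V^{−1} is also of class C¹(A), and V^{±n} map D(A) into D(A) for all n. Set B := max(‖V‖, ‖V^{−1}‖) and C := max(‖ad_A V‖, ‖ad_A V^{−1}‖). Then for every n ≥ 1 and all φ, ψ ∈ D(A): |⟨φ, V^{−n}(A(V^n ψ))⟩ − ⟨φ, Aψ⟩| ≤ C·n·B^{2n−1}·‖φ‖·‖ψ‖ and |⟨φ, V^{n}(A(V^{−n} ψ))⟩ − ⟨φ, Aψ⟩| ≤ C·n·B^{2n−1}·‖φ‖·‖ψ‖. -/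
/-!
Self-adjointness enters through the surjectivity of `A - rI : D(A) → H` for real `r ≠ 0`
(closed range from `‖(A - rI)χ‖² = ‖Aχ‖² + r²‖χ‖²`, dense range since a vector orthogonal to
it would be an eigenvector of `A` for the eigenvalue `-rI`). With `R = (A - rI)⁻¹` one has
`(A - rI) V R = V + (ad_A V) R`, a small perturbation of `V` once `r` is large, hence onto; so `V`
maps `D(A)` onto `D(A)`, and `ad_A V⁻¹ = -V⁻¹ (ad_A V) V⁻¹` follows. The Leibniz rule gives
`‖ad_A V^{±n}‖ ≤ n B^{n-1} C`, and `V^{∓n} A V^{±n} ψ - Aψ = V^{∓n} (ad_A V^{±n}) ψ`.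
-/

open scoped ComplexInnerProductSpace
open Complex

namespace LinearPMap

variable {R E : Type*} [CommRing R] [AddCommGroup E] [Module R E]

/-- `A - μ`, as a linear map on `D(A)`. -/
def shift (A : E →ₗ.[R] E) (μ : R) : A.domain →ₗ[R] E :=
  A.toFun - μ • A.domain.subtype

@[simp]
theorem shift_apply (A : E →ₗ.[R] E) (μ : R) (x : A.domain) : A.shift μ x = A x - μ • (x : E) :=
  rfl

end LinearPMap

section Symmetric

variable {H : Type*} [NormedAddCommGroup H] [InnerProductSpace ℂ H] {A : H →ₗ.[ℂ] H}

namespace LinearPMap.IsFormalAdjoint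

theorem norm_shift_sq (hA : A.IsFormalAdjoint A) (r : ℝ) (χ : A.domain) :
    ‖A.shift (r * I) χ‖ ^ 2 = ‖A χ‖ ^ 2 + r ^ 2 * ‖(χ : H)‖ ^ 2 := by
  have hreal : (⟪A χ, (χ : H)⟫).im = 0 := by
    rw [← conj_eq_iff_im, inner_conj_symm, hA χ χ]
  rw [LinearPMap.shift_apply, @norm_sub_sq ℂ, inner_smul_right, norm_smul]
  simp [hreal, mul_pow]

theorem norm_le_inv_abs_mul_norm_shift (hA : A.IsFormalAdjoint A) {r : ℝ} (hr : r ≠ 0)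
    (χ : A.domain) : ‖(χ : H)‖ ≤ |r|⁻¹ * ‖A.shift (r * I) χ‖ := by
  rw [inv_mul_eq_div, le_div_iff₀ (abs_pos.mpr hr), mul_comm]
  refine le_of_sq_le_sq ?_ (norm_nonneg _)
  rw [hA.norm_shift_sq, mul_pow, sq_abs]
  nlinarith [sq_nonneg ‖A χ‖]

theorem norm_apply_le_norm_shift (hA : A.IsFormalAdjoint A) (r : ℝ) (χ : A.domain) :
    ‖A χ‖ ≤ ‖A.shift (r * I) χ‖ := by
  refine le_of_sq_le_sq ?_ (norm_nonneg _)
  rw [hA.norm_shift_sq]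
  nlinarith [sq_nonneg r, sq_nonneg ‖(χ : H)‖]

theorem injective_shift (hA : A.IsFormalAdjoint A) {r : ℝ} (hr : r ≠ 0) :
    Function.Injective (A.shift (r * I)) := by
  refine (injective_iff_map_eq_zero _).mpr fun χ hχ => Subtype.ext (norm_le_zero_iff.mp ?_)
  simpa [hχ] using hA.norm_le_inv_abs_mul_norm_shift hr χ

end LinearPMap.IsFormalAdjoint

end Symmetric

section SelfAdjoint

variable {H : Type*} [NormedAddCommGroup H] [InnerProductSpace ℂ H] [CompleteSpace H]
  {A : H →ₗ.[ℂ] H}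

namespace IsSelfAdjoint

theorem isFormalAdjoint (hA : IsSelfAdjoint A) : A.IsFormalAdjoint A := by
  have h := LinearPMap.adjoint_isFormalAdjoint hA.dense_domain
  rwa [LinearPMap.isSelfAdjoint_def.mp hA] at h

theorem mem_graph_of_inner_eq (hA : IsSelfAdjoint A) {y w : H}
    (hw : ∀ x : A.domain, ⟪w, (x : H)⟫ = ⟪y, A x⟫) : (y, w) ∈ A.graph := by
  have hy : y ∈ A.adjoint.domain := LinearPMap.mem_adjoint_domain_of_exists y ⟨w, hw⟩
  rw [← LinearPMap.isSelfAdjoint_def.mp hA]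
  exact A.adjoint.mem_graph_iff.mpr
    ⟨⟨y, hy⟩, rfl, LinearPMap.adjoint_apply_eq hA.dense_domain ⟨y, hy⟩ hw⟩

/-- The range of `A - rI` is the image of the (closed, hence complete) graph of `A` under
`(x, y) ↦ y - rI x`, which is antilipschitz on the graph. -/
theorem isClosed_range_shift (hA : IsSelfAdjoint A) {r : ℝ} (hr : r ≠ 0) :
    IsClosed (Set.range (A.shift (r * I))) := by
  have : CompleteSpace A.graph := IsClosed.completeSpace_coe (hs := hA.isClosed)
  let Φ : A.graph →L[ℂ] H :=
    (ContinuousLinearMap.snd ℂ H H - ((r : ℂ) * I) • ContinuousLinearMap.fst ℂ H H).comp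
      A.graph.subtypeL
  have hrange : Set.range (A.shift (r * I)) = Set.range Φ := by
    ext y
    constructor
    · rintro ⟨χ, rfl⟩
      exact ⟨⟨(χ, A χ), A.mem_graph χ⟩, rfl⟩
    · rintro ⟨⟨g, hg⟩, rfl⟩
      obtain ⟨χ, h1, h2⟩ := A.mem_graph_iff.mp hg
      exact ⟨χ, by simp [Φ, ← h1, ← h2]⟩
  have hΦ : AntilipschitzWith (|r|⁻¹ + 1).toNNReal Φ := by
    refine Φ.antilipschitz_of_bound fun ⟨(x, y), hg⟩ => ?_
    obtain ⟨χ, rfl, rfl⟩ : ∃ χ : A.domain, (χ : H) = x ∧ A χ = y := A.mem_graph_iff.mp hg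
    have hΦχ : Φ ⟨(χ, A χ), hg⟩ = A.shift (r * I) χ := rfl
    have h1 := hA.isFormalAdjoint.norm_le_inv_abs_mul_norm_shift hr χ
    have h2 := hA.isFormalAdjoint.norm_apply_le_norm_shift r χ
    have h3 : 0 ≤ |r|⁻¹ * ‖A.shift (r * I) χ‖ := by positivity
    rw [hΦχ, Submodule.coe_norm, Prod.norm_def, Real.coe_toNNReal _ (by positivity)]
    exact max_le (by linarith [norm_nonneg (A.shift (r * I) χ)]) (by dsimp only; linarith)
  rw [hrange]
  exact hΦ.isClosed_range Φ.uniformContinuous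

theorem surjective_shift (hA : IsSelfAdjoint A) {r : ℝ} (hr : r ≠ 0) :
    Function.Surjective (A.shift (r * I)) := by
  set K := LinearMap.range (A.shift (r * I))
  have hclosed : IsClosed (K : Set H) := by
    simpa [K, LinearMap.coe_range] using hA.isClosed_range_shift hr
  have horth : Kᗮ = ⊥ := by
    refine (Submodule.eq_bot_iff _).mpr fun y hy => ?_
    have hy' (x : A.domain) : ⟪A.shift (r * I) x, y⟫ = 0 :=
      (Submodule.mem_orthogonal _ _).mp hy _ (LinearMap.mem_range_self _ x)
    have hgraph : (y, ((-r : ℝ) * I) • y) ∈ A.graph := hA.mem_graph_of_inner_eq fun x => by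
      have h := hy' x
      rw [LinearPMap.shift_apply, inner_sub_left, sub_eq_zero, inner_smul_left] at h
      rw [inner_smul_left, ← inner_conj_symm y (A x), h]
      simp [conj_ofReal, conj_I]
    have hdom := LinearPMap.mem_domain_of_mem_graph hgraph
    have h0 : A.shift ((-r : ℝ) * I) ⟨y, hdom⟩ = A.shift ((-r : ℝ) * I) 0 := by
      rw [LinearPMap.shift_apply, ← (A.image_iff hdom).mpr hgraph, sub_self, map_zero]
    exact congrArg Subtype.val (hA.isFormalAdjoint.injective_shift (neg_ne_zero.mpr hr) h0)
  have hK : K = ⊤ := by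
    rw [← hclosed.submodule_topologicalClosure_eq]
    exact Submodule.topologicalClosure_eq_top_iff.mpr horth
  exact LinearMap.range_eq_top.mp hK

theorem exists_rightInverse_shift (hA : IsSelfAdjoint A) {r : ℝ} (hr : r ≠ 0) :
    ∃ R : H →L[ℂ] A.domain, (∀ z, A.shift (r * I) (R z) = z) ∧ ‖R‖ ≤ |r|⁻¹ := by
  let e := LinearEquiv.ofBijective (A.shift (r * I))
    ⟨hA.isFormalAdjoint.injective_shift hr, hA.surjective_shift hr⟩
  have hbound (z : H) : ‖e.symm z‖ ≤ |r|⁻¹ * ‖z‖ := by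
    have h := hA.isFormalAdjoint.norm_le_inv_abs_mul_norm_shift hr (e.symm z)
    rwa [show A.shift (r * I) (e.symm z) = z from e.apply_symm_apply z] at h
  exact ⟨e.symm.toLinearMap.mkContinuous |r|⁻¹ hbound, e.apply_symm_apply,
    LinearMap.mkContinuous_norm_le _ (by positivity) _⟩

end IsSelfAdjoint

/-- `B` is of class `C¹(A)` with `ad_A B = adB`. -/
def HasCommutator (A : H →ₗ.[ℂ] H) (B adB : H →L[ℂ] H) : Prop :=
  ∀ φ ψ : A.domain, ⟪A φ, B ψ⟫ - ⟪(φ : H), B (A ψ)⟫ = ⟪(φ : H), adB ψ⟫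

namespace HasCommutator

variable {B adB : H →L[ℂ] H}

theorem mem_graph (hB : HasCommutator A B adB) (hA : IsSelfAdjoint A) (χ : A.domain) :
    (B χ, B (A χ) + adB χ) ∈ A.graph := by
  refine hA.mem_graph_of_inner_eq fun x => ?_
  rw [← inner_conj_symm, inner_add_right, ← hB x χ, add_sub_cancel, inner_conj_symm]

theorem mem_domain (hB : HasCommutator A B adB) (hA : IsSelfAdjoint A) (χ : A.domain) :
    B χ ∈ A.domain :=
  LinearPMap.mem_domain_of_mem_graph (hB.mem_graph hA χ)

theorem mapsTo (hB : HasCommutator A B adB) (hA : IsSelfAdjoint A) :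
    Set.MapsTo B A.domain A.domain :=
  fun χ hχ => hB.mem_domain hA ⟨χ, hχ⟩

theorem apply_eq (hB : HasCommutator A B adB) (hA : IsSelfAdjoint A) (χ : A.domain)
    (h : B χ ∈ A.domain) : A ⟨B χ, h⟩ = B (A χ) + adB χ :=
  ((A.image_iff h).mpr (hB.mem_graph hA χ)).symm

theorem mul {B₁ B₂ ad₁ ad₂ : H →L[ℂ] H} (hB₁ : HasCommutator A B₁ ad₁)
    (hB₂ : HasCommutator A B₂ ad₂) (hA : IsSelfAdjoint A) :
    HasCommutator A (B₁ * B₂) (ad₁ * B₂ + B₁ * ad₂) := by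
  intro φ ψ
  have h := hB₁ φ ⟨B₂ ψ, hB₂.mem_domain hA ψ⟩
  rw [hB₂.apply_eq hA] at h
  simp only [mul_apply_eq_comp, add_apply, map_add, inner_add_right] at h ⊢
  linear_combination h

theorem exists_pow_succ (hB : HasCommutator A B adB) (hA : IsSelfAdjoint A) (n : ℕ) :
    ∃ ad, HasCommutator A (B ^ (n + 1)) ad ∧ ‖ad‖ ≤ (n + 1) * ‖B‖ ^ n * ‖adB‖ := by
  induction n with
  | zero => exact ⟨adB, by simpa using hB, by simp⟩
  | succ n ih =>
    obtain ⟨ad, had, hnorm⟩ := ih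
    refine ⟨ad * B + B ^ (n + 1) * adB, pow_succ B (n + 1) ▸ had.mul hB hA, ?_⟩
    have hpow : ‖B ^ (n + 1)‖ ≤ ‖B‖ ^ (n + 1) := norm_pow_le' B n.succ_pos
    calc ‖ad * B + B ^ (n + 1) * adB‖ ≤ ‖ad‖ * ‖B‖ + ‖B ^ (n + 1)‖ * ‖adB‖ :=
          (norm_add_le _ _).trans (add_le_add (norm_mul_le _ _) (norm_mul_le _ _))
      _ ≤ (n + 1) * ‖B‖ ^ n * ‖adB‖ * ‖B‖ + ‖B‖ ^ (n + 1) * ‖adB‖ := by gcongr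
      _ = (↑(n + 1) + 1) * ‖B‖ ^ (n + 1) * ‖adB‖ := by push_cast; ring

section Inverse

variable {V Vinv adV : H →L[ℂ] H}

theorem inv_mapsTo (hV : HasCommutator A V adV) (hA : IsSelfAdjoint A) (hV1 : V * Vinv = 1)
    (hV2 : Vinv * V = 1) : Set.MapsTo Vinv A.domain A.domain := by
  intro ψ hψ
  have hVVinv (x : H) : V (Vinv x) = x := by rw [← mul_apply_eq_comp, hV1, one_apply_eq_self]
  have hVinvV (x : H) : Vinv (V x) = x := by rw [← mul_apply_eq_comp, hV2, one_apply_eq_self]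
  set r : ℝ := ‖Vinv‖ * ‖adV‖ + 1
  have hr : 0 < r := by positivity
  obtain ⟨R, hR, hRnorm⟩ := hA.exists_rightInverse_shift hr.ne'
  set t : H →L[ℂ] H := Vinv * adV * A.domain.subtypeL.comp R
  have ht : ‖-t‖ < 1 := by
    have hR' : ‖A.domain.subtypeL.comp R‖ ≤ r⁻¹ := by
      calc ‖A.domain.subtypeL.comp R‖ ≤ ‖A.domain.subtypeL‖ * ‖R‖ :=
          ContinuousLinearMap.opNorm_comp_le _ _
        _ ≤ 1 * |r|⁻¹ := by gcongr; exact Submodule.norm_subtypeL_le _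
        _ = r⁻¹ := by rw [one_mul, abs_of_pos hr]
    calc ‖-t‖ ≤ ‖Vinv‖ * ‖adV‖ * r⁻¹ := by
          rw [norm_neg]
          exact (norm_mul_le _ _).trans (by gcongr; exact norm_mul_le _ _)
      _ < 1 := by rw [← div_eq_mul_inv, div_lt_one hr]; linarith
  set y := A.shift (r * I) ⟨ψ, hψ⟩
  set z := (↑(Units.oneSub (-t) ht)⁻¹ : H →L[ℂ] H) (Vinv y)
  have hz : z + t z = Vinv y := by
    have h := congrArg (· (Vinv y)) (Units.mul_inv (Units.oneSub (-t) ht))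
    simpa [Units.val_oneSub, sub_apply, add_apply] using h
  set χ := R z
  have hVχ : A.shift (r * I) ⟨V χ, hV.mem_domain hA χ⟩ = y := by
    rw [LinearPMap.shift_apply, hV.apply_eq hA]
    calc V (A χ) + adV χ - (r * I : ℂ) • V χ = V (A.shift (r * I) χ) + adV χ := by
          rw [LinearPMap.shift_apply, map_sub, map_smul]; abel
      _ = V (z + t z) := by simp [hR, t, mul_apply_eq_comp, hVVinv, χ]
      _ = y := by rw [hz, hVVinv]
  have hψχ : V χ = ψ := congrArg Subtype.val (hA.isFormalAdjoint.injective_shift hr.ne' hVχ)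
  rw [← hψχ, hVinvV]
  exact χ.2

theorem inv (hV : HasCommutator A V adV) (hA : IsSelfAdjoint A) (hV1 : V * Vinv = 1)
    (hV2 : Vinv * V = 1) : HasCommutator A Vinv (-(Vinv * adV * Vinv)) := by
  intro φ ψ
  set η : A.domain := ⟨Vinv ψ, hV.inv_mapsTo hA hV1 hV2 ψ.2⟩
  have hψ : (⟨V η, hV.mem_domain hA η⟩ : A.domain) = ψ :=
    Subtype.ext (show V (Vinv ψ) = ψ by rw [← mul_apply_eq_comp, hV1, one_apply_eq_self])
  have hAψ : A ψ = V (A η) + adV η := by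
    have h := hV.apply_eq hA η (hV.mem_domain hA η)
    rwa [hψ] at h
  have hVinvV (x : H) : Vinv (V x) = x := by rw [← mul_apply_eq_comp, hV2, one_apply_eq_self]
  calc ⟪A φ, Vinv ψ⟫ - ⟪(φ : H), Vinv (A ψ)⟫
        = ⟪(φ : H), A η⟫ - ⟪(φ : H), A η + Vinv (adV η)⟫ := by
          rw [hAψ, map_add, hVinvV, ← hA.isFormalAdjoint]
      _ = ⟪(φ : H), (-(Vinv * adV * Vinv)) ψ⟫ := by
          rw [inner_add_right, neg_apply, inner_neg_right]; simp [mul_apply_eq_comp, η]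

end Inverse

theorem norm_inner_pow_sub_le {W W' adW : H →L[ℂ] H} (hW : HasCommutator A W adW)
    (hA : IsSelfAdjoint A) (hW' : W' * W = 1) {B C : ℝ} (hB : ‖W‖ ≤ B) (hB' : ‖W'‖ ≤ B)
    (hC : ‖adW‖ ≤ C) {n : ℕ} (hn : 0 < n) (φ ψ : A.domain) (h : (W ^ n) ψ ∈ A.domain) :
    ‖⟪(φ : H), (W' ^ n) (A ⟨(W ^ n) ψ, h⟩)⟫ - ⟪(φ : H), A ψ⟫‖ ≤
      C * n * B ^ (2 * n - 1) * ‖(φ : H)‖ * ‖(ψ : H)‖ := by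
  obtain ⟨k, rfl⟩ := Nat.exists_eq_add_one_of_ne_zero hn.ne'
  obtain ⟨ad, had, hnorm⟩ := hW.exists_pow_succ hA k
  have hcancel (x : H) : (W' ^ (k + 1)) ((W ^ (k + 1)) x) = x := by
    rw [← mul_apply_eq_comp, pow_mul_pow_eq_one _ hW', one_apply_eq_self]
  have hpow : ‖W' ^ (k + 1)‖ ≤ B ^ (k + 1) :=
    (norm_pow_le' W' k.succ_pos).trans (pow_le_pow_left₀ (norm_nonneg _) hB' _)
  have hB0 : 0 ≤ B := (norm_nonneg _).trans hB
  have had' : ‖ad‖ ≤ (k + 1) * B ^ k * C := hnorm.trans (by gcongr)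
  rw [had.apply_eq hA, map_add, hcancel, inner_add_right, add_sub_cancel_left]
  calc ‖⟪(φ : H), (W' ^ (k + 1)) (ad ψ)⟫‖ ≤ ‖(φ : H)‖ * (‖W' ^ (k + 1)‖ * (‖ad‖ * ‖(ψ : H)‖)) :=
        (norm_inner_le_norm _ _).trans <| by
          gcongr
          exact ContinuousLinearMap.le_opNorm_of_le _ (ContinuousLinearMap.le_opNorm _ _)
    _ ≤ ‖(φ : H)‖ * (B ^ (k + 1) * ((k + 1) * B ^ k * C * ‖(ψ : H)‖)) := by gcongr
    _ = C * ↑(k + 1) * B ^ (2 * (k + 1) - 1) * ‖(φ : H)‖ * ‖(ψ : H)‖ := by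
        rw [show 2 * (k + 1) - 1 = (k + 1) + k by omega, pow_add]; push_cast; ring

end HasCommutator

end SelfAdjoint

theorem stmt10_general
    {H : Type*} [NormedAddCommGroup H] [InnerProductSpace ℂ H] [CompleteSpace H]
    -- A self-adjoint (densely defined) operator on H
    (A : H →ₗ.[ℂ] H) (hsa : A.adjoint = A)
    -- V a bounded invertible operator with inverse Vinv, of class C¹(A) with commutator adV
    (V Vinv adV : H →L[ℂ] H) (hV1 : V * Vinv = 1) (hV2 : Vinv * V = 1)
    (hC1 : ∀ φ ψ : A.domain,
      ⟪A φ, V (ψ : H)⟫ - ⟪(φ : H), V (A ψ)⟫ = ⟪(φ : H), adV (ψ : H)⟫) :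
    -- V⁻¹ is of class C¹(A), with commutator adVinv, ...
    ∃ adVinv : H →L[ℂ] H,
      (∀ φ ψ : A.domain,
        ⟪A φ, Vinv (ψ : H)⟫ - ⟪(φ : H), Vinv (A ψ)⟫ = ⟪(φ : H), adVinv (ψ : H)⟫) ∧
      -- ... the powers V^{±n} preserve D(A), ...
      ∃ (hm : ∀ (n : ℕ) (x : H), x ∈ A.domain → (V ^ n) x ∈ A.domain)
        (hm' : ∀ (n : ℕ) (x : H), x ∈ A.domain → (Vinv ^ n) x ∈ A.domain),
        -- ... and the quantitative bounds hold
        ∀ n : ℕ, 1 ≤ n → ∀ φ ψ : A.domain,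
          ‖⟪(φ : H), (Vinv ^ n) (A ⟨(V ^ n) (ψ : H), hm n ψ ψ.2⟩)⟫ -
              ⟪(φ : H), A ψ⟫‖ ≤
            max ‖adV‖ ‖adVinv‖ * n * max ‖V‖ ‖Vinv‖ ^ (2 * n - 1) *
              ‖(φ : H)‖ * ‖(ψ : H)‖ ∧
          ‖⟪(φ : H), (V ^ n) (A ⟨(Vinv ^ n) (ψ : H), hm' n ψ ψ.2⟩)⟫ -
              ⟪(φ : H), A ψ⟫‖ ≤
            max ‖adV‖ ‖adVinv‖ * n * max ‖V‖ ‖Vinv‖ ^ (2 * n - 1) *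
              ‖(φ : H)‖ * ‖(ψ : H)‖ := by
  have hA : IsSelfAdjoint A := hsa
  have hV : HasCommutator A V adV := hC1
  have hVinv := hV.inv hA hV1 hV2
  have hpow {W : H →L[ℂ] H} (hW : Set.MapsTo W A.domain A.domain) (n : ℕ) :
      Set.MapsTo (W ^ n) A.domain A.domain := by
    induction n with
    | zero => simpa using Set.mapsTo_id _
    | succ n ih => rw [pow_succ']; exact hW.comp ih
  refine ⟨_, hVinv, hpow (hV.mapsTo hA), hpow (hV.inv_mapsTo hA hV1 hV2),
    fun n hn φ ψ => ⟨?_, ?_⟩⟩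
  · exact hV.norm_inner_pow_sub_le hA hV2 (le_max_left _ _) (le_max_right _ _) (le_max_left _ _)
      hn φ ψ _
  · exact hVinv.norm_inner_pow_sub_le hA hV1 (le_max_right _ _) (le_max_left _ _)
      (le_max_right _ _) hn φ ψ _

/-- Lemma 6.14 ("propag01"): let `V` be a bounded invertible operator of class `C¹(A)`.
Then `V⁻¹` is of class `C¹(A)`, `V^{±n}` preserve `D(A)`, and with
`B = max(‖V‖, ‖V⁻¹‖)`, `C = max(‖ad_A V‖, ‖ad_A V⁻¹‖)` the forms
`⟨φ, V^{∓n}AV^{±n}ψ⟩ − ⟨φ, Aψ⟩` are bounded by `C·n·B^{2n−1}·‖φ‖·‖ψ‖` for `n ≥ 1`. -/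
theorem stmt10
    {H : Type*} [NormedAddCommGroup H] [InnerProductSpace ℂ H] [CompleteSpace H]
    -- A self-adjoint (densely defined) operator on H
    (A : H →ₗ.[ℂ] H) (hdense : Dense (A.domain : Set H)) (hsa : A.adjoint = A)
    -- V a bounded invertible operator with inverse Vinv, of class C¹(A) with commutator adV
    (V Vinv adV : H →L[ℂ] H) (hV1 : V * Vinv = 1) (hV2 : Vinv * V = 1)
    (hC1 : ∀ φ ψ : A.domain,
      ⟪A φ, V (ψ : H)⟫ - ⟪(φ : H), V (A ψ)⟫ = ⟪(φ : H), adV (ψ : H)⟫) :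
    -- V⁻¹ is of class C¹(A), with commutator adVinv, ...
    ∃ adVinv : H →L[ℂ] H,
      (∀ φ ψ : A.domain,
        ⟪A φ, Vinv (ψ : H)⟫ - ⟪(φ : H), Vinv (A ψ)⟫ = ⟪(φ : H), adVinv (ψ : H)⟫) ∧
      -- ... the powers V^{±n} preserve D(A), ...
      ∃ (hm : ∀ (n : ℕ) (x : H), x ∈ A.domain → (V ^ n) x ∈ A.domain)
        (hm' : ∀ (n : ℕ) (x : H), x ∈ A.domain → (Vinv ^ n) x ∈ A.domain),
        -- ... and the quantitative bounds hold
        ∀ n : ℕ, 1 ≤ n → ∀ φ ψ : A.domain,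
          ‖⟪(φ : H), (Vinv ^ n) (A ⟨(V ^ n) (ψ : H), hm n ψ ψ.2⟩)⟫ -
              ⟪(φ : H), A ψ⟫‖ ≤
            max ‖adV‖ ‖adVinv‖ * n * max ‖V‖ ‖Vinv‖ ^ (2 * n - 1) *
              ‖(φ : H)‖ * ‖(ψ : H)‖ ∧
          ‖⟪(φ : H), (V ^ n) (A ⟨(Vinv ^ n) (ψ : H), hm' n ψ ψ.2⟩)⟫ -
              ⟪(φ : H), A ψ⟫‖ ≤
            max ‖adV‖ ‖adVinv‖ * n * max ‖V‖ ‖Vinv‖ ^ (2 * n - 1) *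
              ‖(φ : H)‖ * ‖(ψ : H)‖ :=
  stmt10_general A hsa V Vinv adV hV1 hV2 hC1
end

section
/- Let A be a self-adjoint operator with domain D(A) on a Hilbert space H and let U be a unitary operator on H. The following are equivalent: (i) U is of class C¹(A), i.e. there exists a bounded operator B with ⟨Aφ, Uψ⟩ − ⟨φ, U(Aψ)⟩ = ⟨φ, Bψ⟩ for all φ, ψ ∈ D(A); (ii) U(D(A)) ⊆ D(A) and there exists C > 0 with |⟨Uφ, A(Uψ)⟩ − ⟨φ, Aψ⟩| ≤ C·‖φ‖·‖ψ‖ for all φ, ψ ∈ D(A); (iii) U*(D(A)) ⊆ D(A) and there exists C > 0 with |⟨φ, Aψ⟩ − ⟨U*φ, A(U*ψ)⟩| ≤ C·‖φ‖·‖ψ‖ for all φ, ψ ∈ D(A). Moreover, in this case the bounded operator representing the form in (ii) is U*B (that is, ⟨Uφ, A(Uψ)⟩ − ⟨φ, Aψ⟩ = ⟨φ, U*Bψ⟩ for φ, ψ ∈ D(A)), and the bounded operator representing the form in (iii) is (ad_A U)U* = B U* (that is, ⟨φ, Aψ⟩ − ⟨U*φ, A(U*ψ)⟩ = ⟨φ,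 B U*ψ⟩ for φ, ψ ∈ D(A)). -/
open scoped ComplexInnerProductSpace

namespace Stmt11Aux

open ContinuousLinearMap

variable {H : Type*} [NormedAddCommGroup H] [InnerProductSpace ℂ H] [CompleteSpace H]

def AdEq (A : H →ₗ.[ℂ] H) (U B : H →L[ℂ] H) : Prop :=
  ∀ φ ψ : A.domain, ⟪A φ, U (ψ : H)⟫ - ⟪(φ : H), U (A ψ)⟫ = ⟪(φ : H), B (ψ : H)⟫

variable {A : H →ₗ.[ℂ] H} {U B : H →L[ℂ] H}

theorem symm (hdense : Dense (A.domain : Set H)) (hsa : A.adjoint = A)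
    (x y : A.domain) : ⟪A x, (y : H)⟫ = ⟪(x : H), A y⟫ := by
  have h := LinearPMap.adjoint_isFormalAdjoint hdense (T := A)
  rw [hsa] at h
  exact h x y

theorem mem_and_eq (hdense : Dense (A.domain : Set H)) (hsa : A.adjoint = A)
    {y z : H} (h : ∀ φ : A.domain, ⟪A φ, y⟫ = ⟪(φ : H), z⟫) :
    ∃ hy : y ∈ A.domain, A ⟨y, hy⟩ = z := by
  have hy' : y ∈ A.adjoint.domain :=
    LinearPMap.mem_adjoint_domain_of_exists y
      ⟨z, fun x => by rw [← inner_conj_symm, ← h x, inner_conj_symm]⟩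
  have hy : y ∈ A.domain := hsa ▸ hy'
  refine ⟨hy, hdense.eq_of_inner_left ℂ fun v' hv' => ?_⟩
  obtain ⟨v, hv⟩ : ∃ v : A.domain, (v : H) = v' := ⟨⟨v', hv'⟩, rfl⟩
  subst hv
  have h1 : ⟪A ⟨y, hy⟩, (v : H)⟫ = ⟪y, A v⟫ := symm hdense hsa ⟨y, hy⟩ v
  rw [h1, ← inner_conj_symm, h v, inner_conj_symm]

theorem l1 (hdense : Dense (A.domain : Set H)) (hsa : A.adjoint = A)
    (h : AdEq A U B) :
    ∃ hm : ∀ x ∈ A.domain, U x ∈ A.domain,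
      ∀ ψ : A.domain, A ⟨U (ψ : H), hm ψ ψ.2⟩ = U (A ψ) + B (ψ : H) := by
  have key : ∀ ψ : A.domain, ∃ hy : U (ψ : H) ∈ A.domain,
      A ⟨U (ψ : H), hy⟩ = U (A ψ) + B (ψ : H) := by
    intro ψ
    refine mem_and_eq hdense hsa fun φ => ?_
    rw [inner_add_right]
    linear_combination h φ ψ
  exact ⟨fun x hx => (key ⟨x, hx⟩).choose, fun ψ => (key ψ).choose_spec⟩

theorem star_adEq (h : AdEq A U B) : AdEq A (star U) (-(adjoint B)) := by
  intro φ ψ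
  have h1 : ⟪U (φ : H), A ψ⟫ - ⟪U (A φ), (ψ : H)⟫ = ⟪B (φ : H), (ψ : H)⟫ := by
    have h2 := congrArg (starRingEnd ℂ) (h ψ φ)
    simpa [map_sub, inner_conj_symm] using h2
  simp only [star_eq_adjoint, neg_apply, inner_neg_right, adjoint_inner_right]
  linear_combination -h1

theorem apply_star_apply (hU : U ∈ unitary (H →L[ℂ] H)) (x : H) :
    U ((star U) x) = x := by
  have h := (Unitary.mem_iff.mp hU).2
  calc U (star U x) = (U * star U) x := rfl
    _ = x := by rw [h]; rfl

theorem reps (hdense : Dense (A.domain : Set H)) (hsa : A.adjoint = A)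
    (hU : U ∈ unitary (H →L[ℂ] H)) (hB : AdEq A U B) :
    ∃ (hm : ∀ x ∈ A.domain, U x ∈ A.domain)
      (hm' : ∀ x ∈ A.domain, (star U) x ∈ A.domain),
      ∀ φ ψ : A.domain,
        (⟪U (φ : H), A ⟨U (ψ : H), hm ψ ψ.2⟩⟫ - ⟪(φ : H), A ψ⟫ =
          ⟪(φ : H), (star U * B) (ψ : H)⟫) ∧
        (⟪(φ : H), A ψ⟫ - ⟪(star U) (φ : H), A ⟨(star U) (ψ : H), hm' ψ ψ.2⟩⟫ =
          ⟪(φ : H), (B * star U) (ψ : H)⟫) := by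
  obtain ⟨hm, hF1⟩ := l1 hdense hsa hB
  obtain ⟨hm', hF2⟩ := l1 hdense hsa (star_adEq hB)
  have hUstar : star U ∈ unitary (H →L[ℂ] H) := Unitary.star_mem hU
  refine ⟨hm, hm', fun φ ψ => ⟨?_, ?_⟩⟩
  · rw [hF1 ψ, inner_add_right, inner_map_map_of_mem_unitary hU]
    have e : ⟪U (φ : H), B (ψ : H)⟫ = ⟪(φ : H), (star U * B) (ψ : H)⟫ := by
      rw [mul_apply_eq_comp, star_eq_adjoint, adjoint_inner_right]
    linear_combination e
  · -- key pointwise identity : U (B† ψ) = B (U* ψ)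
    have hkey : U ((adjoint B) (ψ : H)) = B ((star U) (ψ : H)) := by
      have h1 := hF1 ⟨(star U) (ψ : H), hm' ψ ψ.2⟩
      have hcast : (⟨U ((star U) (ψ : H)),
          hm ((star U) (ψ : H)) (hm' ψ ψ.2)⟩ : A.domain) = ψ :=
        Subtype.ext (apply_star_apply hU _)
      rw [hcast, hF2 ψ] at h1
      -- h1 : A ψ = U ((star U) (A ψ) + (-(adjoint B)) ψ) + B ((star U) ψ)
      rw [map_add, apply_star_apply hU] at h1
      have h2 : U ((-(adjoint B)) ((ψ : H))) = -(U ((adjoint B) (ψ : H))) := by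
        rw [neg_apply, map_neg]
      rw [h2, add_assoc] at h1
      have h3 := left_eq_add.mp h1
      have h4 := neg_add_eq_zero.mp h3
      exact h4
    rw [hF2 ψ, inner_add_right, inner_map_map_of_mem_unitary hUstar]
    have e2 : ⟪(star U) (φ : H), (-(adjoint B)) (ψ : H)⟫ =
        -⟪(φ : H), B ((star U) (ψ : H))⟫ := by
      rw [neg_apply, inner_neg_right, star_eq_adjoint, adjoint_inner_left,
        hkey, star_eq_adjoint]
    rw [mul_apply_eq_comp]
    linear_combination -e2

theorem l2 (hdense : Dense (A.domain : Set H)) (hsa : A.adjoint = A)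
    (hU : U ∈ unitary (H →L[ℂ] H))
    (hm : ∀ x ∈ A.domain, U x ∈ A.domain) {C : ℝ} (hC : 0 < C)
    (hb : ∀ φ ψ : A.domain,
      ‖⟪U (φ : H), A ⟨U (ψ : H), hm ψ ψ.2⟩⟫ - ⟪(φ : H), A ψ⟫‖ ≤
        C * ‖(φ : H)‖ * ‖(ψ : H)‖) :
    ∃ B : H →L[ℂ] H, AdEq A U B := by
  classical
  -- the densely defined commutator
  set T : A.domain →ₗ[ℂ] H :=
    { toFun := fun ψ => A ⟨U (ψ : H), hm ψ ψ.2⟩ - U (A ψ)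
      map_add' := by
        intro x y
        have hx : (⟨U ((x + y : A.domain) : H), hm _ (x + y).2⟩ : A.domain)
            = ⟨U (x : H), hm x x.2⟩ + ⟨U (y : H), hm y y.2⟩ := by
          ext
          simp [map_add]
        show A ⟨U ((x + y : A.domain) : H), hm _ (x + y).2⟩ - U (A (x + y)) =
          (A ⟨U (x : H), hm x x.2⟩ - U (A x)) + (A ⟨U (y : H), hm y y.2⟩ - U (A y))
        rw [hx, LinearPMap.map_add, LinearPMap.map_add, map_add]
        abel
      map_smul' := by
        intro c x
        have hx : (⟨U ((c • x : A.domain) : H), hm _ (c • x).2⟩ : A.domain)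
            = c • ⟨U (x : H), hm x x.2⟩ := by
          ext
          simp
        show A ⟨U ((c • x : A.domain) : H), hm _ (c • x).2⟩ - U (A (c • x)) =
          c • (A ⟨U (x : H), hm x x.2⟩ - U (A x))
        rw [hx, LinearPMap.map_smul, LinearPMap.map_smul, map_smul, smul_sub] } with hT
  have hTapp : ∀ ψ : A.domain, T ψ = A ⟨U (ψ : H), hm ψ ψ.2⟩ - U (A ψ) := fun _ => rfl
  -- the form identity
  have hform : ∀ φ ψ : A.domain,
      ⟪U (φ : H), T ψ⟫ = ⟪U (φ : H), A ⟨U (ψ : H), hm ψ ψ.2⟩⟫ - ⟪(φ : H), A ψ⟫ := by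
    intro φ ψ
    rw [hTapp, inner_sub_right, inner_map_map_of_mem_unitary hU]
  -- density of the image of the domain under U
  have hd2 : Dense (⇑U '' (A.domain : Set H)) := by
    intro x
    have hx : U ((star U) x) = x := by
      have h := (Unitary.mem_iff.mp hU).2
      calc U (star U x) = (U * star U) x := rfl
        _ = x := by rw [h]; rfl
    exact image_closure_subset_closure_image U.continuous ⟨star U x, hdense _, hx⟩
  -- the bound against arbitrary vectors
  have hb2 : ∀ (ψ : A.domain) (x : H), ‖⟪x, T ψ⟫‖ ≤ C * ‖x‖ * ‖(ψ : H)‖ := by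
    intro ψ x
    have hsub : ⇑U '' (A.domain : Set H) ⊆ {x : H | ‖⟪x, T ψ⟫‖ ≤ C * ‖x‖ * ‖(ψ : H)‖} := by
      rintro _ ⟨φ, hφ, rfl⟩
      have := hb ⟨φ, hφ⟩ ψ
      rw [← hform ⟨φ, hφ⟩ ψ] at this
      simpa [norm_map_of_mem_unitary hU] using this
    have hcl : IsClosed {x : H | ‖⟪x, T ψ⟫‖ ≤ C * ‖x‖ * ‖(ψ : H)‖} := by
      apply isClosed_le
      · exact (Continuous.inner continuous_id continuous_const).norm
      · fun_prop
    exact closure_minimal hsub hcl (hd2 x)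
  -- norm bound for T
  have hbound : ∀ ψ : A.domain, ‖T ψ‖ ≤ C * ‖(ψ : H)‖ := by
    intro ψ
    have h1 := hb2 ψ (T ψ)
    simp only [inner_self_eq_norm_sq_to_K, norm_pow, Complex.norm_real, RCLike.norm_ofReal, abs_norm, norm_norm] at h1
    rcases eq_or_lt_of_le (norm_nonneg (T ψ)) with h0 | h0
    · rw [← h0]; positivity
    · nlinarith
  -- extend to a bounded operator on H
  let Tc : A.domain →L[ℂ] H := T.mkContinuous C hbound
  let Bc : H →L[ℂ] H :=
    Tc.extend (Submodule.subtypeL A.domain)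
  have hBc : ∀ ψ : A.domain, Bc (ψ : H) = T ψ := fun ψ =>
    ContinuousLinearMap.extend_eq _ hdense.denseRange_val
      isUniformEmbedding_subtype_val.isUniformInducing _
  refine ⟨Bc, fun φ ψ => ?_⟩
  rw [hBc, hTapp, inner_sub_right]
  have h3 : ⟪A φ, U (ψ : H)⟫ = ⟪(φ : H), A ⟨U (ψ : H), hm ψ ψ.2⟩⟫ :=
    symm hdense hsa φ ⟨U (ψ : H), hm ψ ψ.2⟩
  rw [h3]

omit [CompleteSpace H] in
theorem bnd (M : H →L[ℂ] H) (x y : H) : ‖⟪x, M y⟫‖ ≤ (‖M‖ + 1) * ‖x‖ * ‖y‖ := by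
  calc ‖⟪x, M y⟫‖ ≤ ‖x‖ * ‖M y‖ := norm_inner_le_norm _ _
    _ ≤ ‖x‖ * (‖M‖ * ‖y‖) := by
      have := M.le_opNorm y
      have := norm_nonneg x
      nlinarith
    _ ≤ (‖M‖ + 1) * ‖x‖ * ‖y‖ := by
      have := norm_nonneg x
      have := norm_nonneg y
      have := norm_nonneg M
      nlinarith

end Stmt11Aux

open Stmt11Aux ContinuousLinearMap in
/-- Lemma 4.1 ("propag0"): characterizations of the class `C¹(A)` for a unitary `U`, and
identification of the bounded operators `(U*AU − A)° = U*·ad_A U` and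
`(A − UAU*)° = (ad_A U)·U*` representing the associated sesquilinear forms. -/
theorem stmt11
    {H : Type*} [NormedAddCommGroup H] [InnerProductSpace ℂ H] [CompleteSpace H]
    -- A self-adjoint (densely defined) operator on H
    (A : H →ₗ.[ℂ] H) (hdense : Dense (A.domain : Set H)) (hsa : A.adjoint = A)
    -- U a unitary operator on H
    (U : H →L[ℂ] H) (hU : U ∈ unitary (H →L[ℂ] H)) :
    -- (i) ↔ (ii)
    ((∃ B : H →L[ℂ] H, ∀ φ ψ : A.domain,
        ⟪A φ, U (ψ : H)⟫ - ⟪(φ : H), U (A ψ)⟫ = ⟪(φ : H), B (ψ : H)⟫) ↔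
      (∃ hm : ∀ x ∈ A.domain, U x ∈ A.domain, ∃ C > (0 : ℝ), ∀ φ ψ : A.domain,
        ‖⟪U (φ : H), A ⟨U (ψ : H), hm ψ ψ.2⟩⟫ - ⟪(φ : H), A ψ⟫‖ ≤
          C * ‖(φ : H)‖ * ‖(ψ : H)‖)) ∧
    -- (i) ↔ (iii)
    ((∃ B : H →L[ℂ] H, ∀ φ ψ : A.domain,
        ⟪A φ, U (ψ : H)⟫ - ⟪(φ : H), U (A ψ)⟫ = ⟪(φ : H), B (ψ : H)⟫) ↔
      (∃ hm' : ∀ x ∈ A.domain, (star U) x ∈ A.domain, ∃ C > (0 : ℝ), ∀ φ ψ : A.domain,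
        ‖⟪(φ : H), A ψ⟫ - ⟪(star U) (φ : H), A ⟨(star U) (ψ : H), hm' ψ ψ.2⟩⟫‖ ≤
          C * ‖(φ : H)‖ * ‖(ψ : H)‖)) ∧
    -- identification of the representing operators: for B = ad_A U, the form in (ii) is
    -- represented by U*B and the form in (iii) by B U*
    (∀ B : H →L[ℂ] H,
      (∀ φ ψ : A.domain,
        ⟪A φ, U (ψ : H)⟫ - ⟪(φ : H), U (A ψ)⟫ = ⟪(φ : H), B (ψ : H)⟫) →
      ∃ (hm : ∀ x ∈ A.domain, U x ∈ A.domain)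
        (hm' : ∀ x ∈ A.domain, (star U) x ∈ A.domain),
        ∀ φ ψ : A.domain,
          (⟪U (φ : H), A ⟨U (ψ : H), hm ψ ψ.2⟩⟫ - ⟪(φ : H), A ψ⟫ =
            ⟪(φ : H), (star U * B) (ψ : H)⟫) ∧
          (⟪(φ : H), A ψ⟫ - ⟪(star U) (φ : H), A ⟨(star U) (ψ : H), hm' ψ ψ.2⟩⟫ =
            ⟪(φ : H), (B * star U) (ψ : H)⟫)) := by
  have hUstar : star U ∈ unitary (H →L[ℂ] H) := Unitary.star_mem hU
  refine ⟨⟨?_, ?_⟩, ⟨?_, ?_⟩, ?_⟩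
  · -- (i) → (ii)
    rintro ⟨B, hB⟩
    obtain ⟨hm, hm', hrep⟩ := reps hdense hsa hU hB
    refine ⟨hm, ‖star U * B‖ + 1, by positivity, fun φ ψ => ?_⟩
    rw [(hrep φ ψ).1]
    exact bnd _ _ _
  · -- (ii) → (i)
    rintro ⟨hm, C, hC, hb⟩
    exact l2 hdense hsa hU hm hC hb
  · -- (i) → (iii)
    rintro ⟨B, hB⟩
    obtain ⟨hm, hm', hrep⟩ := reps hdense hsa hU hB
    refine ⟨hm', ‖B * star U‖ + 1, by positivity, fun φ ψ => ?_⟩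
    rw [(hrep φ ψ).2]
    exact bnd _ _ _
  · -- (iii) → (i)
    rintro ⟨hm', C, hC, hb⟩
    have hb' : ∀ φ ψ : A.domain,
        ‖⟪(star U) (φ : H), A ⟨(star U) (ψ : H), hm' ψ ψ.2⟩⟫ - ⟪(φ : H), A ψ⟫‖ ≤
          C * ‖(φ : H)‖ * ‖(ψ : H)‖ := by
      intro φ ψ
      rw [norm_sub_rev]
      exact hb φ ψ
    obtain ⟨B', hB'⟩ := l2 hdense hsa hUstar hm' hC hb'
    have h2 := star_adEq hB'
    rw [star_star] at h2
    exact ⟨_, h2⟩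
  · -- identification
    intro B hB
    exact reps hdense hsa hU hB
end

section
/- Let A be a self-adjoint operator with domain D(A) on a Hilbert space H, and let U and V be unitary operators on H of class C¹(A) with commutators B_U = ad_A U and B_V = ad_A V. Suppose that the bounded operator −B_U*V + U*B_V (which equals ad_A(U*V)) is compact, and let B be a bounded operator commuting with U*V. Then U*B_U − B is compact if and only if V*B_V − B is compact. -/
open scoped ComplexInnerProductSpace

/-- First part of Lemma 4.8 ("prop-compact"): for unitaries `U, V ∈ C¹(A)` with
commutators `B_U = ad_A U`, `B_V = ad_A V`, if `ad_A(U*V) = −B_U* V + U* B_V` is compact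
and `B` is a bounded operator commuting with `U*V`, then `(U*AU − A)° = U* B_U` is a
compact perturbation of `B` iff `(V*AV − A)° = V* B_V` is. -/
theorem stmt12
    {H : Type*} [NormedAddCommGroup H] [InnerProductSpace ℂ H] [CompleteSpace H]
    -- A self-adjoint (densely defined) operator on H
    (A : H →ₗ.[ℂ] H) (hdense : Dense (A.domain : Set H)) (hsa : A.adjoint = A)
    -- unitary operators U and V of class C¹(A) with commutators BU, BV
    (U V BU BV : H →L[ℂ] H)
    (hU : U ∈ unitary (H →L[ℂ] H)) (hV : V ∈ unitary (H →L[ℂ] H))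
    (hCU : ∀ φ ψ : A.domain,
      ⟪A φ, U (ψ : H)⟫ - ⟪(φ : H), U (A ψ)⟫ = ⟪(φ : H), BU (ψ : H)⟫)
    (hCV : ∀ φ ψ : A.domain,
      ⟪A φ, V (ψ : H)⟫ - ⟪(φ : H), V (A ψ)⟫ = ⟪(φ : H), BV (ψ : H)⟫)
    -- ad_A (U*V) = −B_U* V + U* B_V is compact
    (hcomp : IsCompactOperator ⇑(-(star BU) * V + star U * BV))
    -- B is a bounded operator commuting with U*V
    (B : H →L[ℂ] H) (hB : B * (star U * V) = (star U * V) * B) :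
    (IsCompactOperator ⇑(star U * BU - B) ↔ IsCompactOperator ⇑(star V * BV - B)) := by
  have hUs : star U * U = 1 := (Unitary.mem_iff.mp hU).1
  have hUU : U * star U = 1 := (Unitary.mem_iff.mp hU).2
  have hVs : star V * V = 1 := (Unitary.mem_iff.mp hV).1
  have hVV : V * star V = 1 := (Unitary.mem_iff.mp hV).2
  have aU : ∀ z : H →L[ℂ] H, U * (star U * z) = z := fun z => by
    rw [← mul_assoc, hUU, one_mul]
  have aU' : ∀ z : H →L[ℂ] H, star U * (U * z) = z := fun z => by
    rw [← mul_assoc, hUs, one_mul]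
  have aV : ∀ z : H →L[ℂ] H, V * (star V * z) = z := fun z => by
    rw [← mul_assoc, hVV, one_mul]
  have aV' : ∀ z : H →L[ℂ] H, star V * (V * z) = z := fun z => by
    rw [← mul_assoc, hVs, one_mul]
  -- A is symmetric
  have hAsym : ∀ φ ψ : A.domain, ⟪A φ, (ψ : H)⟫ = ⟪(φ : H), A ψ⟫ := by
    have h : ∀ φ : A.adjoint.domain, ∀ ψ : A.domain,
        ⟪A.adjoint φ, (ψ : H)⟫ = ⟪(φ : H), A ψ⟫ :=
      fun φ ψ => LinearPMap.adjoint_isFormalAdjoint hdense φ ψ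
    rw [hsa] at h
    exact h
  -- U maps D(A) into D(A) with A(Uψ) = U(Aψ) + BUψ
  have key : ∀ ψ : A.domain, ∃ h : U (ψ : H) ∈ A.domain,
      A ⟨U (ψ : H), h⟩ = U (A ψ) + BU (ψ : H) := by
    have key' : ∀ ψ : A.domain, ∃ h : U (ψ : H) ∈ A.adjoint.domain,
        A.adjoint ⟨U (ψ : H), h⟩ = U (A ψ) + BU (ψ : H) := by
      intro ψ
      have hw : ∀ φ : A.domain, ⟪U (A ψ) + BU (ψ : H), (φ : H)⟫ = ⟪U (ψ : H), A φ⟫ := by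
        intro φ
        have h1 := hCU φ ψ
        have h2 : ⟪A φ, U (ψ : H)⟫ = ⟪(φ : H), U (A ψ) + BU (ψ : H)⟫ := by
          rw [inner_add_right]; linear_combination h1
        calc ⟪U (A ψ) + BU (ψ : H), (φ : H)⟫
            = starRingEnd ℂ ⟪(φ : H), U (A ψ) + BU (ψ : H)⟫ := (inner_conj_symm _ _).symm
          _ = starRingEnd ℂ ⟪A φ, U (ψ : H)⟫ := by rw [h2]
          _ = ⟪U (ψ : H), A φ⟫ := inner_conj_symm _ _
      have hmem : U (ψ : H) ∈ A.adjoint.domain :=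
        LinearPMap.mem_adjoint_domain_of_exists _ ⟨U (A ψ) + BU (ψ : H), fun φ => hw φ⟩
      exact ⟨hmem, LinearPMap.adjoint_apply_eq hdense ⟨U (ψ : H), hmem⟩ fun φ => hw φ⟩
    rw [hsa] at key'
    exact key'
  -- star U * BU is self-adjoint
  have hsymm : IsSelfAdjoint (star U * BU : H →L[ℂ] H) := by
    rw [ContinuousLinearMap.isSelfAdjoint_iff_isSymmetric]
    have hd : ∀ φ ψ : A.domain,
        ⟪(star U * BU) (φ : H), (ψ : H)⟫ = ⟪(φ : H), (star U * BU) (ψ : H)⟫ := by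
      intro φ ψ
      obtain ⟨hφm, hφv⟩ := key φ
      have lhs : ⟪(star U * BU) (φ : H), (ψ : H)⟫ = ⟪BU (φ : H), U (ψ : H)⟫ := by
        show ⟪star U (BU (φ : H)), (ψ : H)⟫ = _
        rw [ContinuousLinearMap.star_eq_adjoint, ContinuousLinearMap.adjoint_inner_left]
      have rhs : ⟪(φ : H), (star U * BU) (ψ : H)⟫ = ⟪U (φ : H), BU (ψ : H)⟫ := by
        show ⟪(φ : H), star U (BU (ψ : H))⟫ = _
        rw [ContinuousLinearMap.star_eq_adjoint, ← ContinuousLinearMap.adjoint_inner_left,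
          ContinuousLinearMap.adjoint_adjoint]
      rw [lhs, rhs]
      have h1 := hCU ⟨U (φ : H), hφm⟩ ψ
      rw [hφv] at h1
      have hUU' : ⟪U (φ : H), U (A ψ)⟫ = ⟪(φ : H), A ψ⟫ := by
        rw [← ContinuousLinearMap.adjoint_inner_left, ← ContinuousLinearMap.star_eq_adjoint]
        show ⟪(star U * U) (φ : H), A ψ⟫ = _
        rw [hUs]; rfl
      have hUA : ⟪U (A φ), U (ψ : H)⟫ = ⟪A φ, (ψ : H)⟫ := by
        rw [← ContinuousLinearMap.adjoint_inner_left, ← ContinuousLinearMap.star_eq_adjoint]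
        show ⟪(star U * U) (A φ), (ψ : H)⟫ = _
        rw [hUs]; rfl
      have hAφψ := hAsym φ ψ
      rw [inner_add_left, hUU', hUA] at h1
      linear_combination h1 - hAφψ
    have step1 : ∀ φ : A.domain, ∀ y : H,
        ⟪(star U * BU) (φ : H), y⟫ = ⟪(φ : H), (star U * BU) y⟫ := by
      intro φ
      have hf : Continuous fun y : H => ⟪(star U * BU) (φ : H), y⟫ :=
        continuous_const.inner continuous_id
      have hg : Continuous fun y : H => ⟪(φ : H), (star U * BU) y⟫ :=
        continuous_const.inner (star U * BU).continuous
      have heq : Set.EqOn (fun y : H => ⟪(star U * BU) (φ : H), y⟫)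
          (fun y : H => ⟪(φ : H), (star U * BU) y⟫) (A.domain : Set H) :=
        fun y hy => hd φ ⟨y, hy⟩
      exact fun y => congrFun (Continuous.ext_on hdense hf hg heq) y
    intro x y
    have hf : Continuous fun x : H => ⟪(star U * BU) x, y⟫ :=
      (star U * BU).continuous.inner continuous_const
    have hg : Continuous fun x : H => ⟪x, (star U * BU) y⟫ :=
      continuous_id.inner continuous_const
    have heq : Set.EqOn (fun x : H => ⟪(star U * BU) x, y⟫)
        (fun x : H => ⟪x, (star U * BU) y⟫) (A.domain : Set H) :=
      fun x hx => step1 ⟨x, hx⟩ y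
    exact congrFun (Continuous.ext_on hdense hf hg heq) x
  have hS : (star BU) * U = star U * BU := by
    have h1 : star (star U * BU) = star U * BU := hsymm
    calc (star BU) * U = star (star U * BU) := by rw [star_mul, star_star]
      _ = star U * BU := h1
  have e5 : ∀ z : H →L[ℂ] H, U * (star BU * z) = BU * (star U * z) := by
    intro z
    have h2 : U * star BU = BU * star U := by
      have h3 := congrArg (fun w : H →L[ℂ] H => U * w * star U) hS
      simp only [mul_assoc] at h3
      rw [hUU, mul_one, aU _] at h3
      exact h3
    rw [← mul_assoc, h2, mul_assoc]
  have hB' : B * (star U * V) = star U * (V * B) := by rw [hB, mul_assoc]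
  have hB2 : B * (star V * U) = star V * (U * B) := by
    have h3 := congrArg (fun w : H →L[ℂ] H => (star V * U) * w * (star V * U)) hB
    simp only [mul_assoc] at h3
    rw [aV _, hUs, mul_one, aU _, aV' _] at h3
    exact h3.symm
  -- the main algebraic identities
  have main : star V * BV - B =
      (star V * U) * (-(star BU) * V + star U * BV) +
        (star V * U) * ((star U * BU - B) * (star U * V)) := by
    simp only [mul_add, add_mul, sub_mul, mul_sub, neg_mul, mul_neg, mul_assoc,
      aU, aU', aV, aV', e5, hB']
    abel
  have main2 : star U * BU - B =
      (star U * V) * ((star V * BV - B) * (star V * U)) -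
        (-(star BU) * V + star U * BV) * (star V * U) := by
    simp only [mul_add, add_mul, sub_mul, mul_sub, neg_mul, mul_neg, mul_assoc,
      aU, aU', aV, aV', hB2, hS]
    abel
  constructor
  · intro hX
    have h1 : IsCompactOperator
        ⇑((star V * U) * (-(star BU) * V + star U * BV) +
          (star V * U) * ((star U * BU - B) * (star U * V))) := by
      have hc1 : IsCompactOperator
          ⇑((star V * U) * (-(star BU) * V + star U * BV)) :=
        hcomp.clm_comp (star V * U)
      have hc2 : IsCompactOperator
          ⇑((star V * U) * ((star U * BU - B) * (star U * V))) :=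
        (hX.comp_clm (star U * V)).clm_comp (star V * U)
      exact hc1.add hc2
    rwa [← main] at h1
  · intro hY
    have h1 : IsCompactOperator
        ⇑((star U * V) * ((star V * BV - B) * (star V * U)) -
          (-(star BU) * V + star U * BV) * (star V * U)) := by
      have hc1 : IsCompactOperator
          ⇑((star U * V) * ((star V * BV - B) * (star V * U))) :=
        (hY.comp_clm (star V * U)).clm_comp (star U * V)
      have hc2 : IsCompactOperator
          ⇑((-(star BU) * V + star U * BV) * (star V * U)) :=
        hcomp.comp_clm (star V * U)
      exact hc1.sub hc2
    rwa [← main2] at h1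
end

section
/- Let A be a self-adjoint operator with domain D(A) on a Hilbert space H, and let U be a unitary operator on H of class C¹(A) and of class C¹(A²), where D(A²) = {ψ ∈ D(A) : Aψ ∈ D(A)}. Then there exists a constant C > 0 such that for all φ, ψ ∈ D(A): |⟨U*(A(Uφ)) − Aφ, Aψ⟩ + ⟨Aφ, U*(A(Uψ)) − Aψ⟩| ≤ C·‖φ‖·‖ψ‖, and likewise |⟨Aφ − U(A(U*φ)), Aψ⟩ + ⟨Aφ, Aψ − U(A(U*ψ))⟩| ≤ C·‖φ‖·‖ψ‖. -/
/-!
Let `B = ad_A U`, so that `A U = U A + B` on `D(A)`. Then `U*AU - A = U*B =: T` is bounded, and it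
is self-adjoint because `U*AU` and `A` are symmetric on the dense set `D(A)`. On `D(A²)` the
commutator `B₂ = ad_{A²} U` gives `A(Bψ) = B₂ψ - B(Aψ)`, whence `AT + TA = U*B₂ - B*B`, so
`Q₊(φ, ψ) = ⟪φ, (U*B₂ - B*B) ψ⟫`. Since `A + i` is onto, `D(A²) = (A + i)⁻¹ D(A)` is a core for
`A`, which extends this identity to `D(A) × D(A)`. The form `Q₋` is `-Q₊` for `U*`, whose
commutator is `-B*`.
-/

open scoped ComplexInnerProductSpace
open Complex

theorem norm_inner_apply_le {𝕜 E F : Type*} [RCLike 𝕜] [SeminormedAddCommGroup E]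
    [NormedSpace 𝕜 E] [SeminormedAddCommGroup F] [InnerProductSpace 𝕜 F] (T : E →L[𝕜] F) (x : F)
    (y : E) : ‖inner 𝕜 x (T y)‖ ≤ ‖T‖ * ‖x‖ * ‖y‖ :=
  calc ‖inner 𝕜 x (T y)‖ ≤ ‖x‖ * ‖T y‖ := norm_inner_le_norm _ _
    _ ≤ ‖x‖ * (‖T‖ * ‖y‖) := by gcongr; exact T.le_opNorm y
    _ = ‖T‖ * ‖x‖ * ‖y‖ := by ring

section

variable {H : Type*} [NormedAddCommGroup H] [InnerProductSpace ℂ H]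

namespace LinearPMap

def addI (A : H →ₗ.[ℂ] H) : A.domain →ₗ[ℂ] H :=
  A.toFun + I • A.domain.subtype

@[simp]
theorem addI_apply (A : H →ₗ.[ℂ] H) (x : A.domain) : A.addI x = A x + I • (x : H) := rfl

end LinearPMap

/-- `V ∈ C¹(A)` with `ad_A V = B`, tested on `D(A) × D(A)`. -/
def IsFormCommutator (A : H →ₗ.[ℂ] H) (V B : H →L[ℂ] H) : Prop :=
  ∀ φ ψ : A.domain, ⟪A φ, V ψ⟫ - ⟪(φ : H), V (A ψ)⟫ = ⟪(φ : H), B ψ⟫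

/-- `V ∈ C¹(A²)` with `ad_{A²} V = B₂`, tested on `D(A²) × D(A²)`. -/
def IsFormCommutatorSq (A : H →ₗ.[ℂ] H) (V B₂ : H →L[ℂ] H) : Prop :=
  ∀ (φ ψ : A.domain) (hφ : A φ ∈ A.domain) (hψ : A ψ ∈ A.domain),
    ⟪A ⟨A φ, hφ⟩, V ψ⟫ - ⟪(φ : H), V (A ⟨A ψ, hψ⟩)⟫ = ⟪(φ : H), B₂ ψ⟫

end

section SelfAdjoint

variable {H : Type*} [NormedAddCommGroup H] [InnerProductSpace ℂ H] [CompleteSpace H]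
  {A : H →ₗ.[ℂ] H}

theorem IsSelfAdjoint.isFormalAdjoint_s14 (hA : IsSelfAdjoint A) : A.IsFormalAdjoint A := by
  simpa only [LinearPMap.isSelfAdjoint_def.mp hA] using
    LinearPMap.adjoint_isFormalAdjoint hA.dense_domain

theorem IsSelfAdjoint.exists_mem_domain_of_inner (hA : IsSelfAdjoint A) {v z : H}
    (h : ∀ x : A.domain, ⟪A x, v⟫ = ⟪(x : H), z⟫) : ∃ hv : v ∈ A.domain, A ⟨v, hv⟩ = z := by
  have hv : v ∈ A.domain := by
    rw [← LinearPMap.isSelfAdjoint_def.mp hA]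
    exact LinearPMap.mem_adjoint_domain_of_exists v
      ⟨z, fun x => by rw [← inner_conj_symm, ← h x, inner_conj_symm]⟩
  refine ⟨hv, hA.dense_domain.eq_of_inner_right ℂ fun x hx => ?_⟩
  rw [← hA.isFormalAdjoint_s14 ⟨x, hx⟩ ⟨v, hv⟩, h ⟨x, hx⟩]

theorem IsSelfAdjoint.norm_addI_sq (hA : IsSelfAdjoint A) (x : A.domain) :
    ‖A.addI x‖ ^ 2 = ‖A x‖ ^ 2 + ‖(x : H)‖ ^ 2 := by
  have hre : (⟪A x, (x : H)⟫).im = 0 := by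
    rw [← Complex.conj_eq_iff_im, inner_conj_symm, hA.isFormalAdjoint_s14]
  rw [LinearPMap.addI_apply, @norm_add_sq ℂ, inner_smul_right, norm_smul, Complex.norm_I,
    one_mul]
  simp [hre]

/-- On the closed, hence complete, graph of `A` the map `(x, Ax) ↦ Ax + ix` is bounded below. -/
theorem IsSelfAdjoint.isClosed_range_addI (hA : IsSelfAdjoint A) :
    IsClosed (LinearMap.range A.addI : Set H) := by
  have : CompleteSpace A.graph := hA.isClosed.completeSpace_coe
  let f : A.graph →L[ℂ] H :=
    (ContinuousLinearMap.snd ℂ H H + I • ContinuousLinearMap.fst ℂ H H).comp A.graph.subtypeL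
  have hrange : Set.range f = LinearMap.range A.addI := by
    ext y
    constructor
    · rintro ⟨⟨⟨a, b⟩, hp⟩, rfl⟩
      obtain ⟨x, rfl, rfl⟩ := A.mem_graph_iff.mp hp
      exact ⟨x, rfl⟩
    · rintro ⟨x, rfl⟩
      exact ⟨⟨_, A.mem_graph x⟩, rfl⟩
  have hf : AntilipschitzWith 1 f := f.antilipschitz_of_bound fun ⟨⟨a, b⟩, hp⟩ => by
    obtain ⟨x, rfl, rfl⟩ := A.mem_graph_iff.mp hp
    have hsq := hA.norm_addI_sq x
    rw [LinearPMap.addI_apply] at hsq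
    change max ‖(x : H)‖ ‖A x‖ ≤ 1 * ‖A x + I • (x : H)‖
    rw [one_mul, max_le_iff]
    constructor <;> nlinarith [norm_nonneg (A x + I • (x : H)), norm_nonneg (x : H),
      norm_nonneg (A x)]
  rw [← hrange]
  exact hf.isClosed_range f.uniformContinuous

theorem IsSelfAdjoint.range_addI_eq_top (hA : IsSelfAdjoint A) : LinearMap.range A.addI = ⊤ := by
  have hperp : (LinearMap.range A.addI)ᗮ = ⊥ := by
    refine (Submodule.eq_bot_iff _).2 fun v hv => ?_
    have h : ∀ x : A.domain, ⟪A x, v⟫ = ⟪(x : H), I • v⟫ := fun x => by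
      have h0 := (Submodule.mem_orthogonal _ v).1 hv _ (LinearMap.mem_range_self _ x)
      rw [LinearPMap.addI_apply, inner_add_left, inner_smul_left, Complex.conj_I] at h0
      rw [inner_smul_right]
      linear_combination h0
    obtain ⟨hv', hAv⟩ := hA.exists_mem_domain_of_inner h
    have hsym := hA.isFormalAdjoint_s14 ⟨v, hv'⟩ ⟨v, hv'⟩
    rw [hAv, inner_smul_left, inner_smul_right, Complex.conj_I] at hsym
    have hvv : ⟪v, v⟫ = (0 : ℂ) := by
      linear_combination (I / 2) * hsym + ⟪v, v⟫ * Complex.I_sq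
    exact inner_self_eq_zero.mp hvv
  rw [← hA.isClosed_range_addI.submodule_topologicalClosure_eq]
  exact Submodule.topologicalClosure_eq_top_iff.2 hperp

/-- `D(A²)` is a core for `A`: approximate `(A + i)η` by `χ ∈ D(A)`; the solution `x` of
`(A + i)x = χ` lies in `D(A²)`, and `‖(A + i)(η - x)‖` controls `‖η - x‖` and `‖A(η - x)‖`. -/
theorem IsSelfAdjoint.graph_subset_closure_sq_domain (hA : IsSelfAdjoint A) :
    (A.graph : Set (H × H)) ⊆
      closure {p | ∃ x : A.domain, A x ∈ A.domain ∧ ((x : H), A x) = p} := by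
  rintro ⟨a, b⟩ hp
  obtain ⟨η, rfl, rfl⟩ := A.mem_graph_iff.mp hp
  refine Metric.mem_closure_iff.2 fun ε hε => ?_
  obtain ⟨χ, hχ, hdist⟩ := Metric.mem_closure_iff.1 (hA.dense_domain (A.addI η)) ε hε
  obtain ⟨x, hx⟩ := LinearMap.range_eq_top.1 hA.range_addI_eq_top χ
  have hAx : A x ∈ A.domain := by
    have : A x = χ - I • (x : H) := by rw [← hx, LinearPMap.addI_apply]; abel
    rw [this]
    exact A.domain.sub_mem hχ (A.domain.smul_mem I x.2)
  refine ⟨_, ⟨x, hAx, rfl⟩, ?_⟩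
  have hsq := hA.norm_addI_sq (η - x)
  rw [map_sub, hx, ← dist_eq_norm, LinearPMap.map_sub] at hsq
  rw [Prod.dist_eq, max_lt_iff, dist_eq_norm, dist_eq_norm]
  change ‖((η - x : A.domain) : H)‖ < ε ∧ _
  constructor <;> nlinarith [dist_nonneg (x := A.addI η) (y := χ), norm_nonneg (A η - A x),
    norm_nonneg ((η - x : A.domain) : H)]

theorem IsSelfAdjoint.inner_eq_of_forall_sq_domain (hA : IsSelfAdjoint A) {v z : H}
    (h : ∀ ψ : A.domain, A ψ ∈ A.domain → ⟪A ψ, v⟫ = ⟪(ψ : H), z⟫) (η : A.domain) :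
    ⟪A η, v⟫ = ⟪(η : H), z⟫ := by
  have hclosed : IsClosed {p : H × H | ⟪p.2, v⟫ = ⟪p.1, z⟫} :=
    isClosed_eq (by fun_prop) (by fun_prop)
  exact closure_minimal (by rintro _ ⟨ψ, hψ, rfl⟩; exact h ψ hψ) hclosed
    (hA.graph_subset_closure_sq_domain (A.mem_graph η))

end SelfAdjoint

section Commutator

variable {H : Type*} [NormedAddCommGroup H] [InnerProductSpace ℂ H] [CompleteSpace H]
  {A : H →ₗ.[ℂ] H} {V B B₂ : H →L[ℂ] H}

theorem IsFormCommutator.adjoint (hB : IsFormCommutator A V B) :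
    IsFormCommutator A (star V) (-star B) := fun φ ψ => by
  have h := congrArg (starRingEnd ℂ) (hB ψ φ)
  simp only [map_sub, inner_conj_symm] at h
  simp only [ContinuousLinearMap.star_eq_adjoint, neg_apply, inner_neg_right,
    ContinuousLinearMap.adjoint_inner_right] at h ⊢
  linear_combination -h

theorem IsFormCommutatorSq.adjoint (hB₂ : IsFormCommutatorSq A V B₂) :
    IsFormCommutatorSq A (star V) (-star B₂) := fun φ ψ hφ hψ => by
  have h := congrArg (starRingEnd ℂ) (hB₂ ψ φ hψ hφ)
  simp only [map_sub, inner_conj_symm] at h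
  simp only [ContinuousLinearMap.star_eq_adjoint, neg_apply, inner_neg_right,
    ContinuousLinearMap.adjoint_inner_right] at h ⊢
  linear_combination -h

theorem IsFormCommutator.exists_apply_map (hA : IsSelfAdjoint A) (hB : IsFormCommutator A V B)
    (ψ : A.domain) : ∃ h : V ψ ∈ A.domain, A ⟨V ψ, h⟩ = V (A ψ) + B ψ :=
  hA.exists_mem_domain_of_inner fun φ => by
    rw [inner_add_right]
    linear_combination hB φ ψ

theorem IsFormCommutator.star_apply_map_sub (hA : IsSelfAdjoint A) (hB : IsFormCommutator A V B)
    (hV : star V * V = 1) (ψ : A.domain) (h : V ψ ∈ A.domain) :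
    (star V) (A ⟨V ψ, h⟩) - A ψ = (star V * B) ψ := by
  obtain ⟨_, hAV⟩ := hB.exists_apply_map hA ψ
  rw [hAV, map_add, ← mul_apply_eq_comp, hV, one_apply_eq_self, mul_apply_eq_comp,
    add_sub_cancel_left]

/-- On `D(A)`, `V*B = V*AV - A` is a difference of symmetric operators. -/
theorem IsFormCommutator.isSelfAdjoint_star_mul (hA : IsSelfAdjoint A)
    (hB : IsFormCommutator A V B) (hV : star V * V = 1) : IsSelfAdjoint (star V * B) := by
  have hVV : ∀ x y : H, ⟪V x, V y⟫ = ⟪x, y⟫ := fun x y => by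
    rw [← ContinuousLinearMap.adjoint_inner_left, ← ContinuousLinearMap.star_eq_adjoint,
      ← mul_apply_eq_comp, hV, one_apply_eq_self]
  have hsymm (x y : A.domain) : ⟪(star V * B) x, y⟫ = ⟪(x : H), (star V * B) y⟫ := by
    obtain ⟨hx, hAx⟩ := hB.exists_apply_map hA x
    obtain ⟨hy, hAy⟩ := hB.exists_apply_map hA y
    have h := hA.isFormalAdjoint_s14 ⟨V x, hx⟩ ⟨V y, hy⟩
    simp only [hAx, hAy, inner_add_left, inner_add_right, hVV] at h
    rw [mul_apply_eq_comp, mul_apply_eq_comp, ContinuousLinearMap.star_eq_adjoint,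
      ContinuousLinearMap.adjoint_inner_left, ContinuousLinearMap.adjoint_inner_right]
    linear_combination h - hA.isFormalAdjoint_s14 x y
  rw [ContinuousLinearMap.isSelfAdjoint_iff_isSymmetric]
  intro x y
  have hext := Continuous.ext_on (hA.dense_domain.prod hA.dense_domain)
    (f := fun p : H × H => ⟪(star V * B) p.1, p.2⟫) (g := fun p => ⟪p.1, (star V * B) p.2⟫)
    (by fun_prop) (by fun_prop) fun p hp => hsymm ⟨p.1, hp.1⟩ ⟨p.2, hp.2⟩
  exact congrFun hext (x, y)

theorem IsFormCommutatorSq.exists_apply_commutator (hA : IsSelfAdjoint A)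
    (hB : IsFormCommutator A V B) (hB₂ : IsFormCommutatorSq A V B₂) (ψ : A.domain)
    (hψ : A ψ ∈ A.domain) : ∃ h : B ψ ∈ A.domain, A ⟨B ψ, h⟩ = B₂ ψ - B (A ψ) :=
  hA.exists_mem_domain_of_inner fun φ => hA.inner_eq_of_forall_sq_domain (fun χ hχ => by
    rw [inner_sub_right]
    linear_combination hB₂ χ ψ hχ hψ - hB ⟨A χ, hχ⟩ ψ - hB χ ⟨A ψ, hψ⟩) φ

theorem IsFormCommutatorSq.inner_add_inner_of_mem_sq_domain (hA : IsSelfAdjoint A)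
    (hB : IsFormCommutator A V B) (hB₂ : IsFormCommutatorSq A V B₂) (hV : star V * V = 1)
    (φ ψ : A.domain) (hψ : A ψ ∈ A.domain) :
    ⟪(star V * B) φ, A ψ⟫ + ⟪A φ, (star V * B) ψ⟫ =
      ⟪(φ : H), (star V * B₂ - star B * B) ψ⟫ := by
  obtain ⟨hBψ, hABψ⟩ := hB₂.exists_apply_commutator hA hB ψ hψ
  obtain ⟨hTψ, hATψ⟩ := hB.adjoint.exists_apply_map hA ⟨B ψ, hBψ⟩
  have hT : ⟪(star V * B) φ, A ψ⟫ = ⟪(φ : H), (star V * B) (A ψ)⟫ :=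
    ContinuousLinearMap.isSelfAdjoint_iff_isSymmetric.1 (hB.isSelfAdjoint_star_mul hA hV) _ _
  rw [hT, mul_apply_eq_comp (star V) B (ψ : H), hA.isFormalAdjoint_s14 φ ⟨_, hTψ⟩,
    ← inner_add_right, hATψ, hABψ]
  simp only [sub_apply, mul_apply_eq_comp, neg_apply, map_sub]
  congr 1
  abel

theorem IsFormCommutatorSq.inner_add_inner (hA : IsSelfAdjoint A)
    (hB : IsFormCommutator A V B) (hB₂ : IsFormCommutatorSq A V B₂) (hV : star V * V = 1)
    (φ ψ : A.domain) :
    ⟪(star V * B) φ, A ψ⟫ + ⟪A φ, (star V * B) ψ⟫ =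
      ⟪(φ : H), (star V * B₂ - star B * B) ψ⟫ := by
  have hT : ∀ x y : H, ⟪(star V * B) x, y⟫ = ⟪x, (star V * B) y⟫ :=
    ContinuousLinearMap.isSelfAdjoint_iff_isSymmetric.1 (hB.isSelfAdjoint_star_mul hA hV)
  have key : ⟪A ψ, (star V * B) φ⟫ =
      ⟪(ψ : H), star (star V * B₂ - star B * B) φ - (star V * B) (A φ)⟫ :=
    hA.inner_eq_of_forall_sq_domain (fun χ hχ => by
      have h := congrArg (starRingEnd ℂ)
        (hB₂.inner_add_inner_of_mem_sq_domain hA hB hV φ χ hχ)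
      simp only [map_add, inner_conj_symm] at h
      rw [inner_sub_right, ContinuousLinearMap.star_eq_adjoint (star V * B₂ - star B * B),
        ContinuousLinearMap.adjoint_inner_right]
      linear_combination h - hT χ (A φ)) ψ
  have h := congrArg (starRingEnd ℂ) key
  rw [inner_conj_symm, inner_conj_symm, inner_sub_left,
    ContinuousLinearMap.star_eq_adjoint (star V * B₂ - star B * B),
    ContinuousLinearMap.adjoint_inner_left] at h
  linear_combination h - hT (A φ) ψ

end Commutator

theorem stmt14_general
    {H : Type*} [NormedAddCommGroup H] [InnerProductSpace ℂ H] [CompleteSpace H]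
    -- A self-adjoint (densely defined) operator on H
    (A : H →ₗ.[ℂ] H) (hsa : A.adjoint = A)
    -- U unitary of class C¹(A)
    (U : H →L[ℂ] H) (hU : U ∈ unitary (H →L[ℂ] H))
    (hC1 : ∃ B : H →L[ℂ] H, ∀ φ ψ : A.domain,
      ⟪A φ, U (ψ : H)⟫ - ⟪(φ : H), U (A ψ)⟫ = ⟪(φ : H), B (ψ : H)⟫)
    -- U of class C¹(A²), with D(A²) = {ψ ∈ D(A) : Aψ ∈ D(A)}
    (hC1sq : ∃ B2 : H →L[ℂ] H, ∀ (φ ψ : A.domain)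
      (hφ : A φ ∈ A.domain) (hψ : A ψ ∈ A.domain),
      ⟪A ⟨A φ, hφ⟩, U (ψ : H)⟫ - ⟪(φ : H), U (A ⟨A ψ, hψ⟩)⟫ = ⟪(φ : H), B2 (ψ : H)⟫) :
    -- conclusion: U, U* preserve D(A) and the forms Q₊, Q₋ are bounded on D(A) × D(A)
    ∃ (hm : ∀ x ∈ A.domain, U x ∈ A.domain)
      (hm' : ∀ x ∈ A.domain, (star U) x ∈ A.domain),
      ∃ C > (0 : ℝ), ∀ φ ψ : A.domain,
        ‖⟪(star U) (A ⟨U (φ : H), hm φ φ.2⟩) - A φ, A ψ⟫ +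
            ⟪A φ, (star U) (A ⟨U (ψ : H), hm ψ ψ.2⟩) - A ψ⟫‖ ≤
          C * ‖(φ : H)‖ * ‖(ψ : H)‖ ∧
        ‖⟪A φ - U (A ⟨(star U) (φ : H), hm' φ φ.2⟩), A ψ⟫ +
            ⟪A φ, A ψ - U (A ⟨(star U) (ψ : H), hm' ψ ψ.2⟩)⟫‖ ≤
          C * ‖(φ : H)‖ * ‖(ψ : H)‖ := by
  have hA : IsSelfAdjoint A := LinearPMap.isSelfAdjoint_def.mpr hsa
  obtain ⟨B, hB : IsFormCommutator A U B⟩ := hC1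
  obtain ⟨B₂, hB₂ : IsFormCommutatorSq A U B₂⟩ := hC1sq
  have hUU : star U * U = 1 := Unitary.star_mul_self_of_mem hU
  have hUU' : star (star U) * star U = 1 := by
    rw [star_star]; exact Unitary.mul_star_self_of_mem hU
  have hAstar (χ : A.domain) (h) : A χ - U (A ⟨(star U) χ, h⟩) = -(U * -star B) χ := by
    have hχ := hB.adjoint.star_apply_map_sub hA hUU' χ h
    rw [star_star] at hχ
    rw [← hχ, neg_sub]
  refine ⟨fun x hx => (hB.exists_apply_map hA ⟨x, hx⟩).fst,
    fun x hx => (hB.adjoint.exists_apply_map hA ⟨x, hx⟩).fst,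
    ‖star U * B₂ - star B * B‖ + ‖U * -star B₂ - star (-star B) * -star B‖ + 1, by positivity,
    fun φ ψ => ⟨?_, ?_⟩⟩
  · rw [hB.star_apply_map_sub hA hUU, hB.star_apply_map_sub hA hUU,
      hB₂.inner_add_inner hA hB hUU]
    refine (norm_inner_apply_le _ _ _).trans ?_
    gcongr
    linarith [norm_nonneg (U * -star B₂ - star (-star B) * -star B)]
  · have hE₂ := hB₂.adjoint.inner_add_inner hA hB.adjoint hUU' φ ψ
    rw [star_star] at hE₂
    rw [hAstar, hAstar, inner_neg_left, inner_neg_right, ← neg_add, norm_neg, hE₂]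
    refine (norm_inner_apply_le _ _ _).trans ?_
    gcongr
    linarith [norm_nonneg (star U * B₂ - star B * B)]

/-- Lemma 5.9 ("qf"): if a unitary `U` belongs to `C¹(A) ∩ C¹(A²)`, then the sesquilinear
forms `Q₊(φ,ψ) = ⟨(U*AU−A)φ, Aψ⟩ + ⟨Aφ, (U*AU−A)ψ⟩` and
`Q₋(φ,ψ) = ⟨(A−UAU*)φ, Aψ⟩ + ⟨Aφ, (A−UAU*)ψ⟩`, defined on `D(A) × D(A)`, extend as
bounded forms on `H × H`. -/
theorem stmt14
    {H : Type*} [NormedAddCommGroup H] [InnerProductSpace ℂ H] [CompleteSpace H]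
    -- A self-adjoint (densely defined) operator on H
    (A : H →ₗ.[ℂ] H) (hdense : Dense (A.domain : Set H)) (hsa : A.adjoint = A)
    -- U unitary of class C¹(A)
    (U : H →L[ℂ] H) (hU : U ∈ unitary (H →L[ℂ] H))
    (hC1 : ∃ B : H →L[ℂ] H, ∀ φ ψ : A.domain,
      ⟪A φ, U (ψ : H)⟫ - ⟪(φ : H), U (A ψ)⟫ = ⟪(φ : H), B (ψ : H)⟫)
    -- U of class C¹(A²), with D(A²) = {ψ ∈ D(A) : Aψ ∈ D(A)}
    (hC1sq : ∃ B2 : H →L[ℂ] H, ∀ (φ ψ : A.domain)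
      (hφ : A φ ∈ A.domain) (hψ : A ψ ∈ A.domain),
      ⟪A ⟨A φ, hφ⟩, U (ψ : H)⟫ - ⟪(φ : H), U (A ⟨A ψ, hψ⟩)⟫ = ⟪(φ : H), B2 (ψ : H)⟫) :
    -- conclusion: U, U* preserve D(A) and the forms Q₊, Q₋ are bounded on D(A) × D(A)
    ∃ (hm : ∀ x ∈ A.domain, U x ∈ A.domain)
      (hm' : ∀ x ∈ A.domain, (star U) x ∈ A.domain),
      ∃ C > (0 : ℝ), ∀ φ ψ : A.domain,
        ‖⟪(star U) (A ⟨U (φ : H), hm φ φ.2⟩) - A φ, A ψ⟫ +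
            ⟪A φ, (star U) (A ⟨U (ψ : H), hm ψ ψ.2⟩) - A ψ⟫‖ ≤
          C * ‖(φ : H)‖ * ‖(ψ : H)‖ ∧
        ‖⟪A φ - U (A ⟨(star U) (φ : H), hm' φ φ.2⟩), A ψ⟫ +
            ⟪A φ, A ψ - U (A ⟨(star U) (ψ : H), hm' ψ ψ.2⟩)⟫‖ ≤
          C * ‖(φ : H)‖ * ‖(ψ : H)‖ :=
  stmt14_general A hsa U hU hC1 hC1sq
end
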